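/- arXiv:1201.2861 — 6 statements merged into one kernel-verified Lean document; each statement's English description precedes it below -/
import Mathlib

section
/- Let f:[0,1]→[0,1] be continuous and piecewise monotone with a unique fixed point a. Let c∈[0,1] satisfy c<a and f(c)>a, and suppose f^n(c)≤c for some integer n≥1. Let p be the number of indices i with 0≤i≤n−1 such that f^i(c) and f^{i+1}(c) lie on opposite sides of a (one strictly less than a, the other strictly greater than a). Then p is even, and f has a periodic point of over-rotation number p/(2n); in particular p/(2n) belongs to the over-rotation interval I_f. -/
open Set Function

/-- The function χ_g: 1/2 where (g(x)−x)(g(g(x))−g(x)) ≤ 0, and 0 otherwise. -/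
noncomputable def chi (g : ℝ → ℝ) (x : ℝ) : ℝ :=
  if (g x - x) * (g (g x) - g x) ≤ 0 then 1 / 2 else 0

/-- Over-rotation number of a periodic point `y` of `g`. -/
noncomputable def overRotNum (g : ℝ → ℝ) (y : ℝ) : ℝ :=
  (∑ i ∈ Finset.range (Function.minimalPeriod g y), chi g (g^[i] y)) /
    (Function.minimalPeriod g y : ℝ)

/-- The over-rotation interval of `g` on the domain `s`: the closure of the set of
over-rotation numbers of periodic non-fixed points of `g` in `s`. -/
def overRotInterval (g : ℝ → ℝ) (s : Set ℝ) : Set ℝ :=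
  closure { r : ℝ | ∃ y ∈ s, y ∈ Function.periodicPts g ∧ g y ≠ y ∧ overRotNum g y = r }

/-- `f` is piecewise monotone on `[a,b]`. -/
def PiecewiseMonotoneOn (f : ℝ → ℝ) (a b : ℝ) : Prop :=
  ∃ n : ℕ, ∃ t : Fin (n + 1) → ℝ, StrictMono t ∧ t 0 = a ∧ t (Fin.last n) = b ∧
    ∀ i : Fin n, MonotoneOn f (Set.Icc (t i.castSucc) (t i.succ)) ∨
      AntitoneOn f (Set.Icc (t i.castSucc) (t i.succ))

/-!
Since `a` is the only fixed point, `f` moves every other point towards `a`, so `χ_f(x) = 1/2`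
exactly when `x` and `f x` lie on opposite sides of `a`. Hence the over-rotation number of a
periodic orbit avoiding `a` is its number of crossings of `a` divided by twice the period, and `p`
is even because `c` and `f^n c` both lie to the left of `a`.

If `p < n`, let `s` be the supremum of the points `x` with `f^n x ≤ x` that follow the itinerary
of `c` (relative to `a`) for `n` steps. Pulling `s` back along this itinerary gives such a point
`y ≥ s` with `f^n y = s`, so `y = s` is an `n`-periodic point with the itinerary of `c`. Here
`s = a` is impossible: `f` is monotone or antitone on each side of `a` near `a`, so an orbit that
stays close to `a` and crosses it in both directions, as that of `c` does, crosses `a` at every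
step, whereas the itinerary of `c` has a step that does not cross.

If `p = n`, the even iterates of `c` stay to the left of `a` and cannot increase forever, which
yields a fixed point of `f²` to the left of `a`: an orbit of period two, with over-rotation
number `1/2`.
-/

open Filter Topology

theorem Function.IsPeriodicPt.birkhoffSum_mul {α M : Type*} [AddCommMonoid M] {f : α → α}
    {x : α} {m : ℕ} (hx : IsPeriodicPt f m x) (g : α → M) (k : ℕ) :
    birkhoffSum f g (m * k) x = k • birkhoffSum f g m x := by
  induction k with
  | zero => simp
  | succ k ih => rw [Nat.mul_succ, birkhoffSum_add, ih, (hx.mul_const k).eq, succ_nsmul]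

lemma overRotNum_eq_birkhoffSum_div {g : ℝ → ℝ} {y : ℝ} {q : ℕ} (hq : 0 < q)
    (hy : IsPeriodicPt g q y) : overRotNum g y = birkhoffSum g (chi g) q y / q := by
  obtain ⟨k, rfl⟩ := hy.minimalPeriod_dvd
  have hk : (k : ℝ) ≠ 0 := Nat.cast_ne_zero.2 (right_ne_zero_of_mul hq.ne')
  rw [(isPeriodicPt_minimalPeriod g y).birkhoffSum_mul, nsmul_eq_mul, Nat.cast_mul,
    mul_comm (k : ℝ), mul_div_mul_right _ _ hk]
  rfl

lemma Function.iterate_eq_of_iterate_eq_fixedPt {α : Type*} {f : α → α} {a x : α}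
    (hfix : f a = a) {i j : ℕ} (hij : i ≤ j) (h : f^[i] x = a) : f^[j] x = a := by
  rw [← Nat.sub_add_cancel hij, iterate_add_apply, h, iterate_fixed hfix]

lemma Function.iterate_ne_of_iterate_lt {α : Type*} [Preorder α] {f : α → α} {a x : α}
    (hfix : f a = a) {i n : ℕ} (h : f^[n] x < a) (hi : i ≤ n) : f^[i] x ≠ a :=
  fun h' ↦ h.ne (iterate_eq_of_iterate_eq_fixedPt hfix hi h')

lemma lt_iff_lt_and_lt_iff_lt_of_ne {α : Type*} [LinearOrder α] {x y a : α} (hx : x ≠ a)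
    (hy : y ≠ a) (hlt : y < a → x ≤ a) (hgt : a < y → a ≤ x) :
    (x < a ↔ y < a) ∧ (a < x ↔ a < y) := by
  rcases lt_or_gt_of_ne hx with hx | hx <;> rcases lt_or_gt_of_ne hy with hy | hy
  · exact ⟨iff_of_true hx hy, iff_of_false hx.not_gt hy.not_gt⟩
  · exact absurd (hgt hy) hx.not_ge
  · exact absurd (hlt hy) hx.not_ge
  · exact ⟨iff_of_false hx.not_gt hy.not_gt, iff_of_true hx hy⟩

lemma Nat.exists_le_lt_and_not_succ {P : ℕ → Prop} {k m : ℕ} (hkm : k ≤ m) (hk : P k)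
    (hm : ¬P m) : ∃ j, k ≤ j ∧ j < m ∧ P j ∧ ¬P (j + 1) := by
  induction m, hkm using Nat.le_induction with
  | base => exact absurd hk hm
  | succ m hkm ih =>
    by_cases h : P m
    · exact ⟨m, hkm, m.lt_add_one, h, hm⟩
    · obtain ⟨j, hkj, hjm, hj⟩ := ih h
      exact ⟨j, hkj, hjm.trans m.lt_add_one, hj⟩

lemma exists_lt_and_succ_le {β : Type*} [LinearOrder β] {v : ℕ → β} {n : ℕ} (hn : 0 < n)
    (hv : v n ≤ v 0) : ∃ m < n, v (m + 1) ≤ v m := by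
  by_contra! h
  exact (strictMonoOn_Iic_of_lt_succ (ψ := v) fun m hm ↦ by
    simpa only [Order.succ_eq_add_one] using h m hm) (Set.mem_Iic.2 (Nat.zero_le n))
    (Set.mem_Iic.2 le_rfl) hn |>.not_ge hv

noncomputable def crossingCount (f : ℝ → ℝ) (a x : ℝ) (n : ℕ) : ℕ :=
  ((Finset.range n).filter (fun i =>
    (f^[i] x < a ∧ a < f^[i + 1] x) ∨ (a < f^[i] x ∧ f^[i + 1] x < a))).card

def SameItinerary (f : ℝ → ℝ) (a : ℝ) (n : ℕ) (x y : ℝ) : Prop :=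
  ∀ i ≤ n, (f^[i] x < a ↔ f^[i] y < a) ∧ (a < f^[i] x ↔ a < f^[i] y)

section Itinerary

variable {f : ℝ → ℝ} {a x y : ℝ} {n : ℕ}

lemma SameItinerary.trans {z : ℝ} (hxy : SameItinerary f a n x y)
    (hyz : SameItinerary f a n y z) : SameItinerary f a n x z :=
  fun i hi ↦ ⟨(hxy i hi).1.trans (hyz i hi).1, (hxy i hi).2.trans (hyz i hi).2⟩

lemma crossingCount_le : crossingCount f a x n ≤ n :=
  (Finset.card_filter_le _ _).trans_eq (Finset.card_range n)

lemma crossingCount_succ : crossingCount f a x (n + 1) = crossingCount f a x n +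
    if (f^[n] x < a ∧ a < f^[n + 1] x) ∨ (a < f^[n] x ∧ f^[n + 1] x < a) then 1 else 0 := by
  simp only [crossingCount, Finset.card_filter, Finset.sum_range_succ]

lemma even_crossingCount_iff (h : ∀ i ≤ n, f^[i] x ≠ a) :
    Even (crossingCount f a x n) ↔ (x < a ↔ f^[n] x < a) := by
  induction n with
  | zero => exact iff_of_true ⟨0, rfl⟩ Iff.rfl
  | succ n ih =>
    rw [crossingCount_succ, Nat.even_add, ih fun i hi ↦ h i (by omega)]
    have h₁ := h n (by omega)
    have h₂ := h (n + 1) le_rfl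
    generalize f^[n] x = u at h₁ ⊢
    generalize f^[n + 1] x = v at h₂ ⊢
    rcases lt_or_gt_of_ne h₁ with h₁ | h₁ <;> rcases lt_or_gt_of_ne h₂ with h₂ | h₂ <;>
      simp [h₁, h₂, h₁.not_gt, h₂.not_gt]

lemma crossingCount_congr (h : SameItinerary f a n x y) :
    crossingCount f a x n = crossingCount f a y n := by
  unfold crossingCount
  congr 1
  refine Finset.filter_congr fun i hi ↦ ?_
  rw [Finset.mem_range] at hi
  rw [(h i hi.le).1, (h i hi.le).2, (h (i + 1) hi).1, (h (i + 1) hi).2]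

lemma sameItinerary_of_tendsto {c : ℝ} {L : Filter ℝ} [L.NeBot]
    (hT : ∀ i ≤ n, Tendsto (f^[i]) L (𝓝 (f^[i] x))) (hL : ∀ᶠ y in L, SameItinerary f a n y c)
    (hx : ∀ i ≤ n, f^[i] x ≠ a) (hc : ∀ i ≤ n, f^[i] c ≠ a) : SameItinerary f a n x c :=
  fun i hi ↦ lt_iff_lt_and_lt_iff_lt_of_ne (hx i hi) (hc i hi)
    (fun h ↦ le_of_tendsto (hT i hi) (hL.mono fun _ hy ↦ ((hy i hi).1.2 h).le))
    (fun h ↦ ge_of_tendsto (hT i hi) (hL.mono fun _ hy ↦ ((hy i hi).2.2 h).le))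

end Itinerary

def MovesToward (f : ℝ → ℝ) (s : Set ℝ) (a : ℝ) : Prop :=
  ∀ x ∈ s, (x < a → x < f x) ∧ (a < x → f x < x)

lemma movesToward_of_unique_fixedPt {f : ℝ → ℝ} {a l r : ℝ} (hf : ContinuousOn f (Icc l r))
    (hmaps : MapsTo f (Icc l r) (Icc l r)) (huniq : ∀ x ∈ Icc l r, f x = x → x = a) :
    MovesToward f (Icc l r) a := by
  refine fun x hx ↦ ⟨fun hxa ↦ ?_, fun hxa ↦ ?_⟩
  · by_contra! hfx
    obtain ⟨z, hz, hfz⟩ := exists_mem_Icc_isFixedPt (hf.mono (Icc_subset_Icc_right hx.2)) hx.1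
      (hmaps (left_mem_Icc.2 (hx.1.trans hx.2))).1 hfx
    have := huniq z (Icc_subset_Icc_right hx.2 hz) hfz
    linarith [hz.2]
  · by_contra! hfx
    obtain ⟨z, hz, hfz⟩ := exists_mem_Icc_isFixedPt (hf.mono (Icc_subset_Icc_left hx.1)) hx.2
      hfx (hmaps (right_mem_Icc.2 (hx.1.trans hx.2))).2
    have := huniq z (Icc_subset_Icc_left hx.1 hz) hfz
    linarith [hz.1]

section MovesToward

variable {f : ℝ → ℝ} {s : Set ℝ} {a : ℝ}

lemma MovesToward.chi_eq (h : MovesToward f s a) (hmaps : MapsTo f s s) {x : ℝ} (hxs : x ∈ s)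
    (hxa : x ≠ a) (hfxa : f x ≠ a) :
    chi f x = if (x < a ∧ a < f x) ∨ (a < x ∧ f x < a) then 1 / 2 else 0 := by
  have h₁ := h x hxs
  have h₂ := h (f x) (hmaps hxs)
  unfold chi
  rcases lt_or_gt_of_ne hxa with hx | hx <;> rcases lt_or_gt_of_ne hfxa with hfx | hfx
  · rw [if_neg (mul_pos (sub_pos.2 (h₁.1 hx)) (sub_pos.2 (h₂.1 hfx))).not_ge,
      if_neg (by rintro (⟨-, h⟩ | ⟨h, -⟩) <;> linarith)]
  · rw [if_pos (mul_neg_of_pos_of_neg (sub_pos.2 (h₁.1 hx)) (sub_neg.2 (h₂.2 hfx))).le,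
      if_pos (Or.inl ⟨hx, hfx⟩)]
  · rw [if_pos (mul_neg_of_neg_of_pos (sub_neg.2 (h₁.2 hx)) (sub_pos.2 (h₂.1 hfx))).le,
      if_pos (Or.inr ⟨hx, hfx⟩)]
  · rw [if_neg (mul_pos_of_neg_of_neg (sub_neg.2 (h₁.2 hx)) (sub_neg.2 (h₂.2 hfx))).not_ge,
      if_neg (by rintro (⟨h, -⟩ | ⟨-, h⟩) <;> linarith)]

lemma MovesToward.overRotNum_eq (h : MovesToward f s a) (hmaps : MapsTo f s s) (hfix : f a = a)
    {y : ℝ} (hy : y ∈ s) (hya : y ≠ a) {q : ℕ} (hq : 0 < q) (hyq : IsPeriodicPt f q y) :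
    overRotNum f y = crossingCount f a y q / (2 * q) := by
  have hne : ∀ i, f^[i] y ≠ a := fun i hi ↦ hya <| (hyq.mul_const i).eq.symm.trans <|
    iterate_eq_of_iterate_eq_fixedPt hfix (Nat.le_mul_of_pos_left i hq) hi
  have hchi : ∀ i, chi f (f^[i] y) = if (f^[i] y < a ∧ a < f^[i + 1] y) ∨
      (a < f^[i] y ∧ f^[i + 1] y < a) then 1 / 2 else 0 := fun i ↦ by
    rw [h.chi_eq hmaps (hmaps.iterate i hy) (hne i) (iterate_succ_apply' f i y ▸ hne (i + 1)),
      ← iterate_succ_apply' f i y]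
  rw [overRotNum_eq_birkhoffSum_div hq hyq, birkhoffSum, Finset.sum_congr rfl fun i _ ↦ hchi i]
  simp only [Finset.sum_ite, Finset.sum_const_zero, add_zero, Finset.sum_const, nsmul_eq_mul]
  rw [crossingCount]
  field_simp

end MovesToward

lemma PiecewiseMonotoneOn.exists_left_lap {f : ℝ → ℝ} {l r a : ℝ}
    (hpm : PiecewiseMonotoneOn f l r) (ha : a ∈ Ioc l r) :
    ∃ b < a, MonotoneOn f (Icc b a) ∨ AntitoneOn f (Icc b a) := by
  obtain ⟨N, t, -, ht0, htN, hlaps⟩ := hpm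
  obtain ⟨i, hi, hia⟩ : ∃ i : Fin N, t i.castSucc < a ∧ a ≤ t i.succ := by
    by_contra! h
    have hlt : ∀ k, t k < a := fun k ↦ Fin.induction (ht0 ▸ ha.1) (fun i ↦ h i) k
    exact (hlt (Fin.last N)).not_ge (htN ▸ ha.2)
  exact ⟨t i.castSucc, hi, (hlaps i).imp (·.mono (Icc_subset_Icc_right hia))
    (·.mono (Icc_subset_Icc_right hia))⟩

lemma PiecewiseMonotoneOn.exists_right_lap {f : ℝ → ℝ} {l r a : ℝ}
    (hpm : PiecewiseMonotoneOn f l r) (ha : a ∈ Ico l r) :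
    ∃ d > a, MonotoneOn f (Icc a d) ∨ AntitoneOn f (Icc a d) := by
  obtain ⟨N, t, -, ht0, htN, hlaps⟩ := hpm
  obtain ⟨i, hia, hi⟩ : ∃ i : Fin N, t i.castSucc ≤ a ∧ a < t i.succ := by
    by_contra! h
    have hle : ∀ k, t k ≤ a := fun k ↦ Fin.induction (ht0 ▸ ha.1) (fun i ↦ h i) k
    exact (hle (Fin.last N)).not_gt (htN ▸ ha.2)
  exact ⟨t i.succ, hi, (hlaps i).imp (·.mono (Icc_subset_Icc_left hia))
    (·.mono (Icc_subset_Icc_left hia))⟩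

/- Since `f` fixes `a` and is monotone or antitone on `[b, a]` and on `[a, d]`, it maps each of
`(b, a)` and `(a, d)` to a single side of `a`. The first step of `y` and its last step from right
to left determine these sides, and they force the orbit to cross `a` at every step. -/
lemma crossingCount_eq_self_of_forall_mem_Ioo {f : ℝ → ℝ} {a b d y : ℝ} {n : ℕ}
    (hfix : f a = a) (hb : MonotoneOn f (Icc b a) ∨ AntitoneOn f (Icc b a))
    (hd : MonotoneOn f (Icc a d) ∨ AntitoneOn f (Icc a d))
    (hmem : ∀ i ≤ n, f^[i] y ∈ Ioo b d) (hne : ∀ i ≤ n, f^[i] y ≠ a)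
    (hy : y < a) (hfy : a < f y) (hny : f^[n] y < a) : crossingCount f a y n = n := by
  rcases Nat.eq_zero_or_pos n with rfl | hn
  · rfl
  have hba : b ≤ a := ((hmem 0 hn.le).1.trans hy).le
  have hleft : ∀ x ∈ Ioo b a, a ≤ f x := by
    rcases hb with hm | hm
    · have := hfix ▸ hm ⟨(hmem 0 hn.le).1.le, hy.le⟩ ⟨hba, le_rfl⟩ hy.le
      exact absurd this hfy.not_ge
    · exact fun x hx ↦ hfix ▸ hm ⟨hx.1.le, hx.2.le⟩ ⟨hba, le_rfl⟩ hx.2.le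
  obtain ⟨j, -, hjn, hj, hj₁⟩ :=
    Nat.exists_le_lt_and_not_succ (P := fun k ↦ a < f^[k] y) hn hfy hny.not_gt
  have hj₁ : f (f^[j] y) < a :=
    iterate_succ_apply' f j y ▸ lt_of_le_of_ne (not_lt.1 hj₁) (hne (j + 1) hjn)
  have had : a ≤ d := (hj.trans (hmem j hjn.le).2).le
  have hright : ∀ x ∈ Ioo a d, f x ≤ a := by
    rcases hd with hm | hm
    · have := hfix ▸ hm ⟨le_rfl, had⟩ ⟨hj.le, (hmem j hjn.le).2.le⟩ hj.le
      exact absurd this hj₁.not_ge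
    · exact fun x hx ↦ hfix ▸ hm ⟨le_rfl, had⟩ ⟨hx.1.le, hx.2.le⟩ hx.1.le
  rw [crossingCount, Finset.card_filter_eq_iff.2 fun i hi ↦ ?_, Finset.card_range]
  rw [Finset.mem_range] at hi
  have hi₁ : f (f^[i] y) ≠ a := iterate_succ_apply' f i y ▸ hne (i + 1) hi
  rw [iterate_succ_apply']
  rcases lt_or_gt_of_ne (hne i hi.le) with h | h
  · exact Or.inl ⟨h, lt_of_le_of_ne (hleft _ ⟨(hmem i hi.le).1, h⟩) hi₁.symm⟩
  · exact Or.inr ⟨h, lt_of_le_of_ne (hright _ ⟨h, (hmem i hi.le).2⟩) hi₁⟩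

lemma PiecewiseMonotoneOn.exists_mem_nhds_crossingCount_eq {f : ℝ → ℝ} {l r a : ℝ}
    (hpm : PiecewiseMonotoneOn f l r) (ha : a ∈ Ioo l r) (hfix : f a = a) (n : ℕ) :
    ∃ U ∈ 𝓝 a, ∀ y, (∀ i ≤ n, f^[i] y ∈ U) → (∀ i ≤ n, f^[i] y ≠ a) → y < a → a < f y →
      f^[n] y < a → crossingCount f a y n = n := by
  obtain ⟨b, hb, hbm⟩ := hpm.exists_left_lap ⟨ha.1, ha.2.le⟩
  obtain ⟨d, hd, hdm⟩ := hpm.exists_right_lap ⟨ha.1.le, ha.2⟩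
  exact ⟨Ioo b d, Ioo_mem_nhds hb hd, fun _ ↦ crossingCount_eq_self_of_forall_mem_Ioo hfix hbm hdm⟩

lemma exists_iterate_eq_mem_uIcc {f : ℝ → ℝ} {s : Set ℝ} {a : ℝ} (hs : s.OrdConnected)
    (hf : ContinuousOn f s) (hmaps : MapsTo f s s) (ha : a ∈ s) (hfix : f a = a) (n : ℕ)
    {x : ℝ} (hx : x ∈ s) {t : ℝ} (ht : t ∈ uIcc (f^[n] x) a) :
    ∃ y, f^[n] y = t ∧ ∀ i ≤ n, f^[i] y ∈ uIcc (f^[i] x) a := by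
  induction n generalizing x with
  | zero => exact ⟨t, rfl, fun i hi ↦ by rwa [Nat.le_zero.1 hi]⟩
  | succ n ih =>
    obtain ⟨e, hen, he⟩ := ih (hmaps hx) ht
    obtain ⟨y, hy, hye⟩ : e ∈ f '' uIcc x a :=
      intermediate_value_uIcc (hf.mono (hs.uIcc_subset hx ha))
        (by rw [hfix]; exact he 0 (Nat.zero_le n))
    refine ⟨y, by rw [iterate_succ_apply, hye, hen], fun i hi ↦ ?_⟩
    cases i with
    | zero => exact hy
    | succ i => simpa only [iterate_succ_apply, hye] using he i (by omega)

lemma exists_pullback_sameItinerary {f : ℝ → ℝ} {s : Set ℝ} {a : ℝ} (hs : s.OrdConnected)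
    (hf : ContinuousOn f s) (hmaps : MapsTo f s s) (ha : a ∈ s) (hfix : f a = a) {n : ℕ}
    {x : ℝ} (hx : x ∈ s) (hxa : x < a) (hnx : f^[n] x ≤ x) :
    ∃ y ∈ s, x ≤ y ∧ f^[n] y = x ∧ SameItinerary f a n y x := by
  obtain ⟨y, hyn, hy⟩ := exists_iterate_eq_mem_uIcc hs hf hmaps ha hfix n hx
    (mem_uIcc.2 (Or.inl ⟨hnx, hxa.le⟩))
  have hy₀ : y ∈ Icc x a := uIcc_of_le hxa.le ▸ hy 0 (Nat.zero_le n)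
  refine ⟨y, hs.out hx ha ⟨hy₀.1, hy₀.2⟩, hy₀.1, hyn, fun i hi ↦ ?_⟩
  have hyi := hy i hi
  refine lt_iff_lt_and_lt_iff_lt_of_ne (iterate_ne_of_iterate_lt hfix (hyn ▸ hxa) hi)
    (iterate_ne_of_iterate_lt hfix (hnx.trans_lt hxa) hi) (fun h ↦ ?_) (fun h ↦ ?_)
  · rw [uIcc_of_le h.le] at hyi
    exact hyi.2
  · rw [uIcc_of_ge h.le] at hyi
    exact hyi.1

lemma exists_isPeriodicPt_sameItinerary {f : ℝ → ℝ} {a c l r : ℝ} {n : ℕ}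
    (hf : ContinuousOn f (Icc l r)) (hmaps : MapsTo f (Icc l r) (Icc l r))
    (hpm : PiecewiseMonotoneOn f l r) (hfix : f a = a) (hc : c ∈ Icc l r) (hca : c < a)
    (hfc : a < f c) (hnc : f^[n] c ≤ c) (hlt : crossingCount f a c n < n) :
    ∃ y ∈ Icc l r, y < a ∧ IsPeriodicPt f n y ∧ SameItinerary f a n y c := by
  have ha : a ∈ Ioo l r := ⟨hc.1.trans_lt hca, hfc.trans_le (hmaps hc).2⟩
  have hn : 0 < n := (Nat.zero_le _).trans_lt hlt
  set D := {x ∈ Icc l r | f^[n] x ≤ x ∧ SameItinerary f a n x c}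
  have hcD : c ∈ D := ⟨hc, hnc, fun i _ ↦ ⟨Iff.rfl, Iff.rfl⟩⟩
  have hDa : ∀ x ∈ D, x < a := fun x hx ↦ ((hx.2.2 0 (Nat.zero_le n)).1).2 hca
  have hDn : ∀ x ∈ D, f^[n] x < a := fun x hx ↦ (hx.2.2 n le_rfl).1.2 (hnc.trans_lt hca)
  have hbdd : BddAbove D := ⟨a, fun x hx ↦ (hDa x hx).le⟩
  set s := sSup D
  have hsa : s ≤ a := csSup_le ⟨c, hcD⟩ fun x hx ↦ (hDa x hx).le
  have hsI : s ∈ Icc l r := ⟨hc.1.trans (le_csSup hbdd hcD), hsa.trans ha.2.le⟩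
  have hT : ∀ i, Tendsto (f^[i]) (𝓝[D] s) (𝓝 (f^[i] s)) := fun i ↦
    ((hf.iterate hmaps i) s hsI).mono fun x hx ↦ hx.1
  have : (𝓝[D] s).NeBot := mem_closure_iff_nhdsWithin_neBot.1 (csSup_mem_closure ⟨c, hcD⟩ hbdd)
  replace hsa : s < a := by
    refine hsa.lt_of_ne fun hsa ↦ hlt.ne ?_
    obtain ⟨U, hU, hcross⟩ := hpm.exists_mem_nhds_crossingCount_eq ha hfix n
    have hnear : ∀ i ∈ Iic n, ∀ᶠ x in 𝓝[D] s, f^[i] x ∈ U := fun i _ ↦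
      (hT i).eventually (by rwa [hsa, iterate_fixed hfix])
    obtain ⟨x, hxD, hx⟩ :=
      (eventually_mem_nhdsWithin.and ((finite_Iic n).eventually_all.2 hnear)).exists
    rw [← crossingCount_congr hxD.2.2, hcross x hx
      (fun i hi ↦ iterate_ne_of_iterate_lt hfix (hDn x hxD) hi) (hDa x hxD)
      ((hxD.2.2 1 hn).2.2 hfc) (hDn x hxD)]
  have hns : f^[n] s ≤ s := le_of_tendsto_of_tendsto (hT n)
    (tendsto_id.mono_left nhdsWithin_le_nhds) (eventually_nhdsWithin_of_forall fun x hx ↦ hx.2.1)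
  have hsc : SameItinerary f a n s c := sameItinerary_of_tendsto (fun i _ ↦ hT i)
    (eventually_nhdsWithin_of_forall fun x hx ↦ hx.2.2)
    (fun i hi ↦ iterate_ne_of_iterate_lt hfix (hns.trans_lt hsa) hi)
    (fun i hi ↦ iterate_ne_of_iterate_lt hfix (hnc.trans_lt hca) hi)
  obtain ⟨y, hyI, hsy, hys, hy⟩ := exists_pullback_sameItinerary ordConnected_Icc hf hmaps
    (Ioo_subset_Icc_self ha) hfix hsI hsa hns
  have hys' : y ≤ s := le_csSup hbdd ⟨hyI, hys ▸ hsy, hy.trans hsc⟩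
  rw [le_antisymm hys' hsy] at hys
  exact ⟨s, hsI, hsa, hys, hsc⟩

lemma exists_isPeriodicPt_two {f : ℝ → ℝ} {a c l r : ℝ} {n : ℕ}
    (hf : ContinuousOn f (Icc l r)) (hmaps : MapsTo f (Icc l r) (Icc l r))
    (hmt : MovesToward f (Icc l r) a) (hfix : f a = a) (hc : c ∈ Icc l r) (hca : c < a)
    (hn : 0 < n) (hnc : f^[2 * n] c ≤ c) (hall : crossingCount f a c (2 * n) = 2 * n) :
    ∃ z ∈ Icc l r, z < a ∧ a < f z ∧ IsPeriodicPt f 2 z := by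
  have hcross : ∀ i < 2 * n,
      (f^[i] c < a ∧ a < f^[i + 1] c) ∨ (a < f^[i] c ∧ f^[i + 1] c < a) :=
    fun i hi ↦ Finset.card_filter_eq_iff.1 (hall.trans (Finset.card_range _).symm) i
      (Finset.mem_range.2 hi)
  have heven : ∀ m ≤ n, f^[2 * m] c < a := by
    intro m hm
    induction m with
    | zero => exact hca
    | succ m ih =>
      have ih := ih (by omega)
      rcases hcross (2 * m) (by omega) with h₁ | h₁
      · rcases hcross (2 * m + 1) (by omega) with h₂ | h₂
        · exact absurd h₂.1 h₁.2.not_gt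
        · exact h₂.2
      · exact absurd h₁.1 ih.not_gt
  obtain ⟨m, hmn, hm⟩ := exists_lt_and_succ_le (v := fun m ↦ f^[2 * m] c) hn hnc
  set w := f^[2 * m] c
  have hw : w ∈ Icc l r := hmaps.iterate _ hc
  have hw₂ : f^[2] w ≤ w := by rwa [← iterate_add_apply, add_comm, ← mul_add_one]
  obtain ⟨z, hz, hfz⟩ := exists_mem_Icc_isFixedPt ((hf.iterate hmaps 2).mono
    (Icc_subset_Icc_right hw.2)) hw.1 (hmaps.iterate 2 (left_mem_Icc.2 (hw.1.trans hw.2))).1 hw₂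
  have hzI : z ∈ Icc l r := Icc_subset_Icc_right hw.2 hz
  have hza : z < a := hz.2.trans_lt (heven m hmn.le)
  refine ⟨z, hzI, hza, ?_, hfz⟩
  have hffz : f (f z) = z := hfz.eq
  have hfza : f z ≠ a := fun h ↦ hza.ne (by rw [← hffz, h, hfix])
  by_contra! hfz'
  linarith [(hmt z hzI).1 hza, (hmt (f z) (hmaps hzI)).1 (lt_of_le_of_ne hfz' hfza)]

lemma exists_overRotNum_eq_crossingCount_div {f : ℝ → ℝ} {a c l r : ℝ} {n : ℕ}
    (hf : ContinuousOn f (Icc l r)) (hmaps : MapsTo f (Icc l r) (Icc l r))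
    (hpm : PiecewiseMonotoneOn f l r) (hfix : f a = a)
    (huniq : ∀ x ∈ Icc l r, f x = x → x = a) (hc : c ∈ Icc l r) (hca : c < a) (hfc : a < f c)
    (hn : 0 < n) (hnc : f^[n] c ≤ c) :
    ∃ y ∈ Icc l r, y ∈ periodicPts f ∧ f y ≠ y ∧
      overRotNum f y = crossingCount f a c n / (2 * n) := by
  have hmt := movesToward_of_unique_fixedPt hf hmaps huniq
  suffices ∃ y ∈ Icc l r, y < a ∧ ∃ q > 0, IsPeriodicPt f q y ∧
      (crossingCount f a y q : ℝ) / (2 * q) = crossingCount f a c n / (2 * n) by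
    obtain ⟨y, hy, hya, q, hq, hyq, h⟩ := this
    exact ⟨y, hy, mem_periodicPts.2 ⟨q, hq, hyq⟩, ((hmt y hy).1 hya).ne',
      (hmt.overRotNum_eq hmaps hfix hy hya.ne hq hyq).trans h⟩
  rcases crossingCount_le.lt_or_eq with hlt | heq
  · obtain ⟨y, hy, hya, hyn, hyc⟩ :=
      exists_isPeriodicPt_sameItinerary hf hmaps hpm hfix hc hca hfc hnc hlt
    exact ⟨y, hy, hya, n, hn, hyn, by rw [crossingCount_congr hyc]⟩
  · have hna : f^[n] c < a := hnc.trans_lt hca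
    obtain ⟨k, rfl⟩ : Even n := heq ▸ (even_crossingCount_iff fun i hi ↦
      iterate_ne_of_iterate_lt hfix hna hi).2 (iff_of_true hca hna)
    rw [← two_mul] at heq hnc ⊢
    obtain ⟨z, hz, hza, hfz, hz₂⟩ :=
      exists_isPeriodicPt_two hf hmaps hmt hfix hc hca (by omega) hnc heq
    have hz₂' : crossingCount f a z 2 = 2 := by
      rw [crossingCount, Finset.card_filter_eq_iff.2, Finset.card_range]
      intro i hi
      rw [Finset.mem_range] at hi
      interval_cases i
      · exact Or.inl ⟨hza, hfz⟩
      · exact Or.inr ⟨hfz, hz₂.eq.symm ▸ hza⟩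
    refine ⟨z, hz, hza, 2, two_pos, hz₂, ?_⟩
    rw [hz₂', heq]
    field_simp
    exact (div_self (Nat.cast_ne_zero.2 (by omega))).symm

theorem stmt0_general (f : ℝ → ℝ) (a c : ℝ) (n : ℕ)
    (hf : ContinuousOn f (Set.Icc 0 1))
    (hmaps : Set.MapsTo f (Set.Icc 0 1) (Set.Icc 0 1))
    (hpm : PiecewiseMonotoneOn f 0 1)
    (hfix : f a = a)
    (huniq : ∀ x ∈ Set.Icc (0:ℝ) 1, f x = x → x = a)
    (hc : c ∈ Set.Icc (0:ℝ) 1) (hca : c < a) (hfc : a < f c)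
    (hn : 1 ≤ n) (hfn : f^[n] c ≤ c)
    (p : ℕ)
    (hp : p = ((Finset.range n).filter (fun i =>
        (f^[i] c < a ∧ a < f^[i+1] c) ∨ (a < f^[i] c ∧ f^[i+1] c < a))).card) :
    Even p ∧
    (∃ y ∈ Set.Icc (0:ℝ) 1, y ∈ Function.periodicPts f ∧ f y ≠ y ∧
      overRotNum f y = (p : ℝ) / (2 * n)) ∧
    ((p : ℝ) / (2 * n)) ∈ overRotInterval f (Set.Icc 0 1) := by
  change p = crossingCount f a c n at hp
  subst hp
  have hnc : f^[n] c < a := hfn.trans_lt hca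
  have hex := exists_overRotNum_eq_crossingCount_div hf hmaps hpm hfix huniq hc hca hfc hn hfn
  exact ⟨(even_crossingCount_iff fun i hi ↦ iterate_ne_of_iterate_lt hfix hnc hi).2
    (iff_of_true hca hnc), hex, subset_closure hex⟩

theorem stmt0 (f : ℝ → ℝ) (a c : ℝ) (n : ℕ)
    (hf : ContinuousOn f (Set.Icc 0 1))
    (hmaps : Set.MapsTo f (Set.Icc 0 1) (Set.Icc 0 1))
    (hpm : PiecewiseMonotoneOn f 0 1)
    (ha : a ∈ Set.Icc (0:ℝ) 1) (hfix : f a = a)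
    (huniq : ∀ x ∈ Set.Icc (0:ℝ) 1, f x = x → x = a)
    (hc : c ∈ Set.Icc (0:ℝ) 1) (hca : c < a) (hfc : a < f c)
    (hn : 1 ≤ n) (hfn : f^[n] c ≤ c)
    (p : ℕ)
    (hp : p = ((Finset.range n).filter (fun i =>
        (f^[i] c < a ∧ a < f^[i+1] c) ∨ (a < f^[i] c ∧ f^[i+1] c < a))).card) :
    Even p ∧
    (∃ y ∈ Set.Icc (0:ℝ) 1, y ∈ Function.periodicPts f ∧ f y ≠ y ∧
      overRotNum f y = (p : ℝ) / (2 * n)) ∧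
    ((p : ℝ) / (2 * n)) ∈ overRotInterval f (Set.Icc 0 1) :=
  stmt0_general f a c n hf hmaps hpm hfix huniq hc hca hfc hn hfn p hp
end

section
/- Let g:[0,1]→[0,1] be continuous with g(0)=g(1)=0, g increasing on [0,c] and decreasing on [c,1] for some c∈(0,1), let a∈(c,1] be the unique fixed point of g in (0,1], and let a'∈[0,c] be the unique g-preimage of a in [0,c]. Let [u,v]⊆[0,1] and let f:[u,v]→[u,v] be a continuous piecewise-monotone map whose unique fixed point in [g²(c),g(c)] is a. Suppose [g²(c),g(c)]⊆[u,v], f≤g on [g²(c),a'], f≥g on [c,a], and f≤g on [a,g(c)]. Then f is more repellent from a than g on the set B=ψ_g([g²(c),g(c)]) = [g²(c),a'] ∪ [c,g(c)], and consequently I_f ⊇ I_g. -/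
open Set Function

/-!
On `B` the comparison is immediate from the monotonicity of `g` and the three inequalities between
`f` and `g`. For the over-rotation intervals, let `P` be a periodic orbit of `g` other than a fixed
point. Both `g` and `f` push points left of the unique fixed point `a` to the right and points right
of `a` to the left, so `χ` only records on which side of `a` consecutive points lie.
If `P` visits `[0, a')`, start it there at `y`: being more repellent, `f` maps `[y, c]` over
`[g y, a]` and each `[x, a]`, `x ∈ P`, over `[g x, a]`, and this loop of intervals carries a
periodic orbit of `f` that is on the same side of `a` as `P` at every step. Otherwise `P` alternates
around `a`, so its over-rotation number is `1/2`, and its largest point left of `a` produces a point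
`x` with `f² x ≤ x < f x`, hence an orbit of period two of `f`, whose over-rotation number is `1/2`
as well.
-/

open SignType

theorem sign_eq_sign_of_forall_ne_zero {k : ℝ → ℝ} {s t : ℝ} (hk : ContinuousOn k (uIcc s t))
    (h0 : ∀ x ∈ uIcc s t, k x ≠ 0) : sign (k s) = sign (k t) := by
  by_contra hne
  have hs := h0 s left_mem_uIcc
  have ht := h0 t right_mem_uIcc
  have hmem : (0 : ℝ) ∈ uIcc (k s) (k t) := by
    rcases hs.lt_or_gt with hs | hs <;> rcases ht.lt_or_gt with ht | ht
    · simp [sign_neg hs, sign_neg ht] at hne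
    · exact mem_uIcc_of_le hs.le ht.le
    · exact mem_uIcc_of_ge ht.le hs.le
    · simp [sign_pos hs, sign_pos ht] at hne
  obtain ⟨x, hx, hx0⟩ := intermediate_value_uIcc hk hmem
  exact h0 x hx hx0

theorem sign_sub_self_eq_sign_sub {h : ℝ → ℝ} {S : Set ℝ} {a e₁ e₂ t : ℝ} (hS : S.OrdConnected)
    (hh : ContinuousOn h S) (hfix : ∀ x ∈ S, h x = x → x = a) (ha : h a = a)
    (he₁ : e₁ ∈ S) (he₁a : e₁ < a) (h₁ : e₁ < h e₁)
    (he₂ : e₂ ∈ S) (he₂a : a < e₂) (h₂ : h e₂ < e₂) (ht : t ∈ S) :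
    sign (h t - t) = sign (a - t) := by
  have key : ∀ e ∈ S, (∀ x ∈ uIcc t e, x ≠ a) → sign (h t - t) = sign (h e - e) :=
    fun e he hne => sign_eq_sign_of_forall_ne_zero
      ((hh.mono (hS.uIcc_subset ht he)).sub continuousOn_id)
      fun x hx h0 => hne x hx (hfix x (hS.uIcc_subset ht he hx) (sub_eq_zero.1 h0))
  rcases lt_trichotomy t a with hta | rfl | hta
  · rw [key e₁ he₁ fun x hx => (hx.2.trans_lt (sup_lt_iff.2 ⟨hta, he₁a⟩)).ne,
      sign_pos (sub_pos.2 h₁), sign_pos (sub_pos.2 hta)]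
  · simp [ha]
  · rw [key e₂ he₂ fun x hx => ((lt_inf_iff.2 ⟨hta, he₂a⟩).trans_le hx.1).ne',
      sign_neg (sub_neg.2 h₂), sign_neg (sub_neg.2 hta)]

theorem sign_sub_eq_of_mem_uIcc {x z a : ℝ} (hz : z ∈ uIcc x a) (hza : z ≠ a) :
    sign (a - z) = sign (a - x) := by
  rcases mem_uIcc.1 hz with ⟨hxz, hza'⟩ | ⟨haz, hzx⟩
  · have := hza'.lt_of_ne hza
    rw [sign_pos (sub_pos.2 this), sign_pos (sub_pos.2 (hxz.trans_lt this))]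
  · have := haz.lt_of_ne hza.symm
    rw [sign_neg (sub_neg.2 this), sign_neg (sub_neg.2 (this.trans_le hzx))]

theorem exists_eq_forall_lt_of_le {k : ℝ → ℝ} {p q m : ℝ} (hpq : p ≤ q)
    (hk : ContinuousOn k (Icc p q)) (hp : k p ≤ m) (hq : m ≤ k q) :
    ∃ w ∈ Icc p q, k w = m ∧ ∀ t ∈ Ico p w, k t < m := by
  have hcl : IsClosed (Icc p q ∩ k ⁻¹' Ici m) :=
    hk.preimage_isClosed_of_isClosed isClosed_Icc isClosed_Ici
  obtain ⟨w, ⟨hw, hmw⟩, hleast⟩ :=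
    (isCompact_Icc.of_isClosed_subset hcl inter_subset_left).exists_isLeast ⟨q, ⟨hpq, le_rfl⟩, hq⟩
  obtain ⟨s, hs, hks⟩ := intermediate_value_Icc hw.1 (hk.mono (Icc_subset_Icc le_rfl hw.2))
    ⟨hp, hmw⟩
  have hsw : s = w := le_antisymm hs.2 (hleast ⟨⟨hs.1, hs.2.trans hw.2⟩, hks.ge⟩)
  refine ⟨w, hw, hsw ▸ hks, fun t ht => lt_of_not_ge fun hmt => ?_⟩
  exact (hleast ⟨⟨ht.1, ht.2.le.trans hw.2⟩, hmt⟩).not_gt ht.2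

theorem exists_Icc_mapsTo_Icc {h : ℝ → ℝ} {x₁ x₂ l r : ℝ} (hx : x₁ ≤ x₂)
    (hh : ContinuousOn h (Icc x₁ x₂)) (h₁ : h x₁ ≤ l) (hlr : l ≤ r) (h₂ : r ≤ h x₂) :
    ∃ A B, x₁ ≤ A ∧ A ≤ B ∧ B ≤ x₂ ∧ h A = l ∧ h B = r ∧ MapsTo h (Icc A B) (Icc l r) := by
  have hcl : IsClosed (Icc x₁ x₂ ∩ h ⁻¹' Iic l) :=
    hh.preimage_isClosed_of_isClosed isClosed_Icc isClosed_Iic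
  obtain ⟨A, ⟨hA, hAl⟩, hgreatest⟩ :=
    (isCompact_Icc.of_isClosed_subset hcl inter_subset_left).exists_isGreatest
      ⟨x₁, ⟨le_rfl, hx⟩, h₁⟩
  have hcont : ContinuousOn h (Icc A x₂) := hh.mono (Icc_subset_Icc hA.1 le_rfl)
  obtain ⟨s, hs, hks⟩ := intermediate_value_Icc hA.2 hcont ⟨hAl, hlr.trans h₂⟩
  have hsA : s = A := le_antisymm (hgreatest ⟨⟨hA.1.trans hs.1, hs.2⟩, hks.le⟩) hs.1
  have hAl' : h A = l := hsA ▸ hks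
  obtain ⟨B, hB, hBr, hlt⟩ := exists_eq_forall_lt_of_le hA.2 hcont (hAl'.trans_le hlr) h₂
  refine ⟨A, B, hA.1, hB.1, hB.2, hAl', hBr, fun t ht => ⟨le_of_not_gt fun htl => ?_, ?_⟩⟩
  · have htA := le_antisymm (hgreatest ⟨⟨hA.1.trans ht.1, ht.2.trans hB.2⟩, htl.le⟩) ht.1
    exact htl.ne (htA ▸ hAl')
  · rcases ht.2.lt_or_eq with htB | rfl
    exacts [(hlt t ⟨ht.1, htB⟩).le, hBr.le]

theorem exists_uIcc_subset_image_eq_uIcc_apply {h : ℝ → ℝ} {x₁ x₂ : ℝ}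
    (hh : ContinuousOn h (uIcc x₁ x₂)) :
    ∃ A B, uIcc A B ⊆ uIcc x₁ x₂ ∧ h '' uIcc A B = uIcc (h x₁) (h x₂) := by
  wlog hx : x₁ ≤ x₂ generalizing x₁ x₂
  · obtain ⟨A, B, hsub, himage⟩ := this (uIcc_comm x₁ x₂ ▸ hh) (le_of_not_ge hx)
    exact ⟨A, B, uIcc_comm x₁ x₂ ▸ hsub, uIcc_comm (h x₁) (h x₂) ▸ himage⟩
  rw [uIcc_of_le hx] at hh ⊢
  rcases le_total (h x₁) (h x₂) with hle | hle
  · obtain ⟨A, B, hA, hAB, hB, hAl, hBr, hmaps⟩ := exists_Icc_mapsTo_Icc hx hh le_rfl hle le_rfl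
    refine ⟨A, B, uIcc_of_le hAB ▸ Icc_subset_Icc hA hB, ?_⟩
    rw [uIcc_of_le hAB, uIcc_of_le hle]
    refine hmaps.image_subset.antisymm ?_
    rw [← hAl, ← hBr]
    exact intermediate_value_Icc hAB (hh.mono (Icc_subset_Icc hA hB))
  · obtain ⟨A, B, hA, hAB, hB, hAl, hBr, hmaps⟩ :=
      exists_Icc_mapsTo_Icc hx hh.neg le_rfl (neg_le_neg hle) le_rfl
    refine ⟨A, B, uIcc_of_le hAB ▸ Icc_subset_Icc hA hB, ?_⟩
    rw [uIcc_of_le hAB, uIcc_of_ge hle]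
    refine subset_antisymm ?_ ?_
    · rintro _ ⟨t, ht, rfl⟩
      obtain ⟨h₁, h₂⟩ := hmaps ht
      exact ⟨neg_le_neg_iff.1 h₂, neg_le_neg_iff.1 h₁⟩
    · simp only [Pi.neg_apply, neg_inj] at hAl hBr
      rw [← hAl, ← hBr]
      exact intermediate_value_Icc' hAB (hh.mono (Icc_subset_Icc hA hB))

theorem exists_uIcc_subset_image_eq {h : ℝ → ℝ} {A B l r : ℝ}
    (hh : ContinuousOn h (uIcc A B)) (hlr : uIcc l r ⊆ h '' uIcc A B) :
    ∃ A' B', uIcc A' B' ⊆ uIcc A B ∧ h '' uIcc A' B' = uIcc l r := by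
  obtain ⟨x₁, hx₁, rfl⟩ := hlr left_mem_uIcc
  obtain ⟨x₂, hx₂, rfl⟩ := hlr right_mem_uIcc
  have hsub := uIcc_subset_uIcc hx₁ hx₂
  obtain ⟨A', B', hsub', himage⟩ := exists_uIcc_subset_image_eq_uIcc_apply (hh.mono hsub)
  exact ⟨A', B', hsub'.trans hsub, himage⟩

theorem exists_isFixedPt_of_uIcc_subset_image {F : ℝ → ℝ} {A B : ℝ}
    (hF : ContinuousOn F (uIcc A B)) (hsub : uIcc A B ⊆ F '' uIcc A B) :
    ∃ z ∈ uIcc A B, IsFixedPt F z := by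
  obtain ⟨s, hs, hFs⟩ := hsub ⟨le_rfl, inf_le_sup⟩
  obtain ⟨t, ht, hFt⟩ := hsub ⟨inf_le_sup, le_rfl⟩
  have hst := uIcc_subset_uIcc hs ht
  obtain ⟨z, hz, hz0⟩ := intermediate_value_uIcc ((hF.mono hst).sub continuousOn_id)
    (mem_uIcc_of_le (sub_nonpos.2 (by rw [hFs]; exact hs.1))
      (sub_nonneg.2 (by rw [hFt]; exact ht.2)))
  exact ⟨z, hst hz, sub_eq_zero.1 hz0⟩

theorem exists_isPeriodicPt_of_uIcc_chain {f : ℝ → ℝ} {s t : ℕ → ℝ} {p : ℕ}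
    (hf : ∀ j < p, ContinuousOn f (uIcc (s j) (t j)))
    (hcov : ∀ j < p, uIcc (s (j + 1)) (t (j + 1)) ⊆ f '' uIcc (s j) (t j))
    (hloop : uIcc (s 0) (t 0) ⊆ uIcc (s p) (t p)) :
    ∃ z, IsPeriodicPt f p z ∧ ∀ j ≤ p, f^[j] z ∈ uIcc (s j) (t j) := by
  have key : ∀ k ≤ p, ∃ A B, uIcc A B ⊆ uIcc (s 0) (t 0) ∧ ContinuousOn f^[k] (uIcc A B) ∧
      (∀ j ≤ k, MapsTo f^[j] (uIcc A B) (uIcc (s j) (t j))) ∧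
      f^[k] '' uIcc A B = uIcc (s k) (t k) := by
    intro k
    induction k with
    | zero =>
      refine fun _ => ⟨s 0, t 0, subset_rfl, continuousOn_id, fun j hj => ?_, image_id _⟩
      obtain rfl := Nat.le_zero.1 hj
      exact mapsTo_id _
    | succ k ih =>
      intro hk
      obtain ⟨A, B, hAB, hcont, hmaps, himage⟩ := ih (by omega)
      have hcont' : ContinuousOn f^[k + 1] (uIcc A B) := by
        rw [iterate_succ']
        exact (hf k (by omega)).comp hcont (hmaps k le_rfl)
      have hcov' : uIcc (s (k + 1)) (t (k + 1)) ⊆ f^[k + 1] '' uIcc A B := by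
        rw [iterate_succ', image_comp, himage]
        exact hcov k (by omega)
      obtain ⟨A', B', hsub, himage'⟩ := exists_uIcc_subset_image_eq hcont' hcov'
      refine ⟨A', B', hsub.trans hAB, hcont'.mono hsub, fun j hj => ?_, himage'⟩
      rcases hj.lt_or_eq with hj | rfl
      · exact (hmaps j (by omega)).mono_left hsub
      · exact himage' ▸ mapsTo_image _ _
  obtain ⟨A, B, hAB, hcont, hmaps, himage⟩ := key p le_rfl
  obtain ⟨z, hz, hfix⟩ := exists_isFixedPt_of_uIcc_subset_image hcont (himage ▸ hAB.trans hloop)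
  exact ⟨z, hfix, fun j hj => hmaps j hj hz⟩

theorem exists_apply_apply_eq_of_lt_of_apply_apply_le {f : ℝ → ℝ} {u v x : ℝ}
    (hf : ContinuousOn f (Icc u v)) (hm : MapsTo f (Icc u v) (Icc u v)) (hx : x ∈ Icc u v)
    (h₁ : x < f x) (h₂ : f (f x) ≤ x) : ∃ z ∈ Icc u v, f (f z) = z ∧ f z ≠ z := by
  have hfx := hm hx
  obtain ⟨d, hd, hfd⟩ := intermediate_value_Icc' h₁.le (hf.mono (Icc_subset_Icc hx.1 hfx.2))
    ⟨h₂, h₁.le⟩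
  have hxd : x < d := hd.1.lt_of_ne (by rintro rfl; exact h₁.ne hfd.symm)
  have hdv : d ∈ Icc u v := ⟨hx.1.trans hd.1, hd.2.trans hfx.2⟩
  -- `f (f t) - t ≥ 0` at `t = d`; find `w ≥ d` where it is `≤ 0`, with no fixed point in `[d, w]`
  obtain ⟨w, hw, hffw, hnofix⟩ : ∃ w ∈ Icc d v, f (f w) ≤ w ∧ ∀ t ∈ Icc d w, f t ≠ t := by
    by_cases H : ∃ t ∈ Icc d v, d ≤ f t
    · obtain ⟨t, ht, hdt⟩ := H
      obtain ⟨w, hw, hfw, hlt⟩ := exists_eq_forall_lt_of_le ht.1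
        (hf.mono (Icc_subset_Icc hdv.1 ht.2)) (hfd.trans_lt hxd).le hdt
      have hdw : d < w := hw.1.lt_of_ne (by rintro rfl; linarith)
      refine ⟨w, ⟨hw.1, hw.2.trans ht.2⟩, by rw [hfw, hfd]; exact (hxd.trans hdw).le,
        fun s hs => ?_⟩
      rcases hs.2.lt_or_eq with hsw | rfl
      · exact ((hlt s ⟨hs.1, hsw⟩).trans_le hs.1).ne
      · exact hfw ▸ hdw.ne
    · push Not at H
      exact ⟨v, ⟨hdv.2, le_rfl⟩, (hm (hm ⟨hx.1.trans hx.2, le_rfl⟩)).2,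
        fun s hs => ((H s ⟨hs.1, hs.2⟩).trans_le hs.1).ne⟩
  have hφ : ContinuousOn (fun t => f (f t) - t) (Icc d w) :=
    ((hf.comp hf hm).mono (Icc_subset_Icc hdv.1 hw.2)).sub continuousOn_id
  obtain ⟨z, hz, hz0⟩ := intermediate_value_Icc' hw.1 hφ
    ⟨sub_nonpos.2 hffw, sub_nonneg.2 (by rw [hfd]; exact hd.2)⟩
  exact ⟨z, ⟨hdv.1.trans hz.1, hz.2.trans hw.2⟩, sub_eq_zero.1 hz0, hnofix z hz⟩

theorem Function.Periodic.sum_range_add {M : Type*} [AddCancelCommMonoid M] {c : ℕ → M} {n : ℕ}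
    (hc : Periodic c n) (k : ℕ) :
    ∑ i ∈ Finset.range n, c (i + k) = ∑ i ∈ Finset.range n, c i := by
  induction k with
  | zero => rfl
  | succ k ih =>
    have h₁ := Finset.sum_range_succ (fun i => c (i + k)) n
    have h₂ := Finset.sum_range_succ' (fun i => c (i + k)) n
    rw [h₁, add_comm n k, hc k, zero_add] at h₂
    rw [← ih]
    simpa only [add_right_comm _ 1 k, add_assoc, add_left_inj] using h₂.symm

theorem Function.Periodic.sum_range_mul {M : Type*} [AddCommMonoid M] {c : ℕ → M} {n : ℕ}
    (hc : Periodic c n) (m : ℕ) :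
    ∑ i ∈ Finset.range (m * n), c i = m • ∑ i ∈ Finset.range n, c i := by
  induction m with
  | zero => simp
  | succ m ih =>
    rw [Nat.succ_mul, Finset.sum_range_add, ih, succ_nsmul]
    congr 1
    exact Finset.sum_congr rfl fun i _ => by rw [add_comm]; exact hc.nat_mul m i

theorem chi_congr {F G : ℝ → ℝ} {x y : ℝ} (h₁ : sign (F x - x) = sign (G y - y))
    (h₂ : sign (F (F x) - F x) = sign (G (G y) - G y)) : chi F x = chi G y := by
  simp only [chi, ← sign_nonpos_iff (a := (_ : ℝ) * _), sign_mul, h₁, h₂]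

theorem chi_eq_half_of_apply_apply_eq {F : ℝ → ℝ} {x : ℝ} (h : F (F x) = x) : chi F x = 1 / 2 :=
  if_pos (by rw [h]; nlinarith [sq_nonneg (F x - x)])

theorem periodic_chi_iterate (h : ℝ → ℝ) (y : ℝ) :
    Periodic (fun i => chi h (h^[i] y)) (minimalPeriod h y) := fun i => by
  simp only [iterate_add_apply, iterate_minimalPeriod]

theorem overRotNum_eq_of_isPeriodicPt {h : ℝ → ℝ} {y : ℝ} {n : ℕ} (hy : IsPeriodicPt h n y)
    (hn : 0 < n) : overRotNum h y = (∑ i ∈ Finset.range n, chi h (h^[i] y)) / n := by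
  obtain ⟨m, rfl⟩ := hy.minimalPeriod_dvd
  have hm : (m : ℝ) ≠ 0 := by simp only [Nat.cast_ne_zero]; rintro rfl; simp at hn
  rw [mul_comm, (periodic_chi_iterate h y).sum_range_mul, nsmul_eq_mul, overRotNum]
  push_cast
  field_simp

theorem overRotNum_iterate {h : ℝ → ℝ} {y : ℝ} (hy : y ∈ periodicPts h) (k : ℕ) :
    overRotNum h (h^[k] y) = overRotNum h y := by
  simp only [overRotNum, minimalPeriod_apply_iterate hy, ← iterate_add_apply,
    (periodic_chi_iterate h y).sum_range_add]

theorem overRotNum_eq_half {h : ℝ → ℝ} {y : ℝ} (hy : y ∈ periodicPts h)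
    (hchi : ∀ i, chi h (h^[i] y) = 1 / 2) : overRotNum h y = 1 / 2 := by
  have := minimalPeriod_pos_of_mem_periodicPts hy
  simp only [overRotNum, hchi, Finset.sum_const, Finset.card_range, nsmul_eq_mul]
  field_simp

theorem iterate_mem_periodicPts {α : Type*} {h : α → α} {y : α} (hy : y ∈ periodicPts h)
    (i : ℕ) : h^[i] y ∈ periodicPts h :=
  mk_mem_periodicPts (minimalPeriod_pos_of_mem_periodicPts hy)
    ((isPeriodicPt_minimalPeriod h y).apply_iterate i)

theorem apply_iterate_ne {α : Type*} {h : α → α} {y : α} (hy : y ∈ periodicPts h)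
    (hne : h y ≠ y) (i : ℕ) : h (h^[i] y) ≠ h^[i] y := fun hfix =>
  hne (minimalPeriod_eq_one_iff_isFixedPt.1
    (minimalPeriod_apply_iterate hy i ▸ minimalPeriod_eq_one_iff_isFixedPt.2 hfix))

theorem exists_apply_iterate_eq {α : Type*} {h : α → α} {y : α} (hy : y ∈ periodicPts h)
    (i : ℕ) : ∃ j, h (h^[j] y) = h^[i] y := by
  have := minimalPeriod_pos_of_mem_periodicPts hy
  refine ⟨i + minimalPeriod h y - 1, ?_⟩
  rw [← iterate_succ_apply' h, Nat.succ_eq_add_one, Nat.sub_add_cancel (by omega),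
    iterate_add_apply, iterate_minimalPeriod]

theorem exists_forall_iterate_le {α : Type*} [LinearOrder α] {h : α → α} {y : α}
    (hy : y ∈ periodicPts h) : ∃ i, ∀ j, h^[i] y ≤ h^[j] y := by
  have hpos := minimalPeriod_pos_of_mem_periodicPts hy
  obtain ⟨i, -, hi⟩ := (Finset.range (minimalPeriod h y)).exists_min_image (fun i => h^[i] y)
    ⟨0, Finset.mem_range.2 hpos⟩
  refine ⟨i, fun j => ?_⟩
  rw [← (isPeriodicPt_minimalPeriod h y).iterate_mod_apply j]
  exact hi _ (Finset.mem_range.2 (Nat.mod_lt _ hpos))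

theorem exists_iterate_forall_le_of_exists {α : Type*} [LinearOrder α] {h : α → α} {y : α}
    (hy : y ∈ periodicPts h) {P : α → Prop} (hP : ∃ i, P (h^[i] y)) :
    ∃ i, P (h^[i] y) ∧ ∀ j, P (h^[j] y) → h^[j] y ≤ h^[i] y := by
  classical
  have hpos := minimalPeriod_pos_of_mem_periodicPts hy
  have hmod := (isPeriodicPt_minimalPeriod h y).iterate_mod_apply
  obtain ⟨i₀, hi₀⟩ := hP
  obtain ⟨i, hi, hmax⟩ :=
    ((Finset.range (minimalPeriod h y)).filter fun i => P (h^[i] y)).exists_max_image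
      (fun i => h^[i] y) ⟨i₀ % minimalPeriod h y, by simp [Nat.mod_lt _ hpos, hmod, hi₀]⟩
  refine ⟨i, (Finset.mem_filter.1 hi).2, fun j hj => ?_⟩
  rw [← hmod j]
  exact hmax _ (by simp [Nat.mod_lt _ hpos, hmod, hj])

structure UnimodalMap (g : ℝ → ℝ) (c a a' : ℝ) : Prop where
  continuousOn : ContinuousOn g (Icc 0 1)
  mapsTo : MapsTo g (Icc 0 1) (Icc 0 1)
  map_zero : g 0 = 0
  map_one : g 1 = 0
  turning_mem : c ∈ Ioo 0 1
  strictMonoOn : StrictMonoOn g (Icc 0 c)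
  strictAntiOn : StrictAntiOn g (Icc c 1)
  fixed_mem : a ∈ Ioc c 1
  map_fixed : g a = a
  eq_fixed : ∀ x ∈ Ioc 0 1, g x = x → x = a
  preimage_mem : a' ∈ Icc 0 c
  map_preimage : g a' = a

def MoreRepellentOn (f g : ℝ → ℝ) (a : ℝ) (B : Set ℝ) : Prop :=
  ∀ x ∈ B, uIcc (g x) a ⊆ uIcc (f x) a

namespace MoreRepellentOn

variable {f g : ℝ → ℝ} {a x : ℝ} {B : Set ℝ}

theorem apply_le (hrep : MoreRepellentOn f g a B) (hx : x ∈ B) (hgx : g x < a) : f x ≤ g x := by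
  rcases mem_uIcc.1 (hrep x hx left_mem_uIcc) with h | h
  exacts [h.1, absurd h.1 hgx.not_ge]

theorem le_apply (hrep : MoreRepellentOn f g a B) (hx : x ∈ B) (hgx : a < g x) : g x ≤ f x := by
  rcases mem_uIcc.1 (hrep x hx left_mem_uIcc) with h | h
  exacts [absurd h.2 hgx.not_ge, h.2]

end MoreRepellentOn

namespace UnimodalMap

variable {f g : ℝ → ℝ} {c a a' t x y u v : ℝ}

theorem turning_mem_Icc (hg : UnimodalMap g c a a') : c ∈ Icc c 1 :=
  ⟨le_rfl, hg.turning_mem.2.le⟩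

theorem fixed_mem_Icc (hg : UnimodalMap g c a a') : a ∈ Icc c 1 :=
  ⟨hg.fixed_mem.1.le, hg.fixed_mem.2⟩

theorem fixed_lt_apply_turning (hg : UnimodalMap g c a a') : a < g c :=
  hg.map_fixed ▸ hg.strictAntiOn hg.turning_mem_Icc hg.fixed_mem_Icc hg.fixed_mem.1

theorem turning_le_apply_turning (hg : UnimodalMap g c a a') : c ≤ g c :=
  (hg.fixed_mem.1.trans hg.fixed_lt_apply_turning).le

theorem apply_turning_mem_Icc (hg : UnimodalMap g c a a') : g c ∈ Icc c 1 :=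
  ⟨hg.turning_le_apply_turning, (hg.mapsTo ⟨hg.turning_mem.1.le, hg.turning_mem.2.le⟩).2⟩

theorem apply_apply_turning_nonneg (hg : UnimodalMap g c a a') : 0 ≤ g (g c) :=
  (hg.mapsTo ⟨hg.turning_mem.1.le.trans hg.turning_le_apply_turning,
    hg.apply_turning_mem_Icc.2⟩).1

theorem apply_le_apply_turning (hg : UnimodalMap g c a a') (ht : t ∈ Icc 0 1) : g t ≤ g c := by
  rcases le_total t c with htc | htc
  · exact hg.strictMonoOn.monotoneOn ⟨ht.1, htc⟩ ⟨hg.turning_mem.1.le, le_rfl⟩ htc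
  · exact hg.strictAntiOn.antitoneOn hg.turning_mem_Icc ⟨htc, ht.2⟩ htc

theorem apply_lt_fixed (hg : UnimodalMap g c a a') (ht : t ∈ Ioc a 1) : g t < a :=
  hg.map_fixed ▸ hg.strictAntiOn hg.fixed_mem_Icc ⟨(hg.fixed_mem.1.trans ht.1).le, ht.2⟩ ht.1

theorem apply_apply_turning_lt_fixed (hg : UnimodalMap g c a a') : g (g c) < a :=
  hg.apply_lt_fixed ⟨hg.fixed_lt_apply_turning, hg.apply_turning_mem_Icc.2⟩

theorem fixed_mem_Icc_apply_turning (hg : UnimodalMap g c a a') : a ∈ Icc (g (g c)) (g c) :=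
  ⟨hg.apply_apply_turning_lt_fixed.le, hg.fixed_lt_apply_turning.le⟩

theorem preimage_lt_turning (hg : UnimodalMap g c a a') : a' < c :=
  hg.preimage_mem.2.lt_of_ne fun h => hg.fixed_lt_apply_turning.ne (h ▸ hg.map_preimage).symm

theorem apply_lt_fixed_of_lt_preimage (hg : UnimodalMap g c a a') (ht : t ∈ Ico 0 a') :
    g t < a :=
  hg.map_preimage ▸ hg.strictMonoOn ⟨ht.1, (ht.2.trans_le hg.preimage_mem.2).le⟩
    ⟨hg.preimage_mem.1, hg.preimage_mem.2⟩ ht.2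

theorem fixed_lt_apply (hg : UnimodalMap g c a a') (ht : t ∈ Ioo a' a) : a < g t := by
  rcases le_total t c with htc | htc
  · exact hg.map_preimage ▸ hg.strictMonoOn ⟨hg.preimage_mem.1, hg.preimage_mem.2⟩
      ⟨hg.preimage_mem.1.trans ht.1.le, htc⟩ ht.1
  · exact hg.map_fixed ▸ hg.strictAntiOn ⟨htc, ht.2.le.trans hg.fixed_mem.2⟩ hg.fixed_mem_Icc ht.2

theorem fixed_lt_one (hg : UnimodalMap g c a a') : a < 1 :=
  hg.fixed_mem.2.lt_of_ne fun h => by simpa [h, hg.map_one] using hg.map_fixed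

theorem sign_apply_sub_self (hg : UnimodalMap g c a a') (ht : t ∈ Ioc 0 1) :
    sign (g t - t) = sign (a - t) :=
  sign_sub_self_eq_sign_sub ordConnected_Ioc (hg.continuousOn.mono Ioc_subset_Icc_self)
    hg.eq_fixed hg.map_fixed ⟨hg.turning_mem.1, hg.turning_mem.2.le⟩ hg.fixed_mem.1
    (hg.fixed_mem.1.trans hg.fixed_lt_apply_turning) ⟨one_pos, le_rfl⟩ hg.fixed_lt_one
    (by rw [hg.map_one]; exact one_pos) ht

theorem lt_apply (hg : UnimodalMap g c a a') (ht : t ∈ Ioo 0 a) : t < g t := by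
  have := hg.sign_apply_sub_self ⟨ht.1, ht.2.le.trans hg.fixed_mem.2⟩
  rwa [sign_pos (sub_pos.2 ht.2), sign_eq_one_iff, sub_pos] at this

theorem iterate_mem_Ioc (hg : UnimodalMap g c a a') (hy : y ∈ Icc 0 1) (hyp : y ∈ periodicPts g)
    (hgy : g y ≠ y) (i : ℕ) : g^[i] y ∈ Ioc 0 1 := by
  have hi := hg.mapsTo.iterate i hy
  refine ⟨hi.1.lt_of_ne fun h => apply_iterate_ne hyp hgy i ?_, hi.2⟩
  rw [← h, hg.map_zero]

theorem iterate_ne_fixed (hg : UnimodalMap g c a a') (hyp : y ∈ periodicPts g) (hgy : g y ≠ y)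
    (i : ℕ) : g^[i] y ≠ a := fun h =>
  apply_iterate_ne hyp hgy i (h ▸ hg.map_fixed)

theorem iterate_ne_preimage (hg : UnimodalMap g c a a') (hyp : y ∈ periodicPts g)
    (hgy : g y ≠ y) (i : ℕ) : g^[i] y ≠ a' := fun h =>
  hg.iterate_ne_fixed hyp hgy (i + 1) (by rw [iterate_succ_apply', h, hg.map_preimage])

theorem iterate_mem_Icc (hg : UnimodalMap g c a a') (hy : y ∈ Icc 0 1) (hyp : y ∈ periodicPts g)
    (hgy : g y ≠ y) (i : ℕ) : g^[i] y ∈ Icc (g (g c)) (g c) := by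
  have hle : ∀ i, g^[i] y ≤ g c := fun i => by
    obtain ⟨j, hj⟩ := exists_apply_iterate_eq hyp i
    exact hj ▸ hg.apply_le_apply_turning (hg.mapsTo.iterate j hy)
  refine ⟨?_, hle i⟩
  -- the lowest point of the orbit is the image of a point right of `a`
  obtain ⟨i₀, hmin⟩ := exists_forall_iterate_le hyp
  obtain ⟨j, hj⟩ := exists_apply_iterate_eq hyp i₀
  have hj' := hg.iterate_mem_Ioc hy hyp hgy j
  have haj : a < g^[j] y := by
    refine lt_of_not_ge fun hja => ?_
    have := hg.lt_apply ⟨hj'.1, hja.lt_of_ne (hg.iterate_ne_fixed hyp hgy j)⟩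
    exact (hj ▸ this).not_ge (hmin j)
  refine le_trans ?_ (hj ▸ hmin i)
  exact hg.strictAntiOn.antitoneOn ⟨(hg.fixed_mem.1.trans haj).le, hj'.2⟩
    hg.apply_turning_mem_Icc (hle j)

theorem moreRepellentOn (hg : UnimodalMap g c a a')
    (h₁ : ∀ x ∈ Icc (g (g c)) a', f x ≤ g x) (h₂ : ∀ x ∈ Icc c a, g x ≤ f x)
    (h₃ : ∀ x ∈ Icc a (g c), f x ≤ g x) :
    MoreRepellentOn f g a (Icc (g (g c)) a' ∪ Icc c (g c)) := by
  have hgc := hg.apply_turning_mem_Icc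
  rintro x (hx | hx)
  · have hgx : g x ≤ a := hg.map_preimage ▸ hg.strictMonoOn.monotoneOn
      ⟨hg.apply_apply_turning_nonneg.trans hx.1, hx.2.trans hg.preimage_mem.2⟩
      ⟨hg.preimage_mem.1, hg.preimage_mem.2⟩ hx.2
    exact uIcc_subset_uIcc (mem_uIcc_of_le (h₁ x hx) hgx) right_mem_uIcc
  rcases le_total x a with hxa | hax
  · have hgx : a ≤ g x := hg.map_fixed ▸ hg.strictAntiOn.antitoneOn
      ⟨hx.1, hx.2.trans hgc.2⟩ hg.fixed_mem_Icc hxa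
    exact uIcc_subset_uIcc (mem_uIcc_of_ge hgx (h₂ x ⟨hx.1, hxa⟩)) right_mem_uIcc
  · have hgx : g x ≤ a := hg.map_fixed ▸ hg.strictAntiOn.antitoneOn
      hg.fixed_mem_Icc ⟨hx.1, hx.2.trans hgc.2⟩ hax
    exact uIcc_subset_uIcc (mem_uIcc_of_le (h₃ x ⟨hax, hx.2⟩) hgx) right_mem_uIcc

theorem sign_apply_sub_self_of_moreRepellentOn (hg : UnimodalMap g c a a')
    (hf : ContinuousOn f (Icc (g (g c)) (g c))) (hfa : f a = a)
    (hfix : ∀ x ∈ Icc (g (g c)) (g c), f x = x → x = a)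
    (hrep : MoreRepellentOn f g a (Icc (g (g c)) a' ∪ Icc c (g c)))
    (ht : t ∈ Icc (g (g c)) (g c)) : sign (f t - t) = sign (a - t) := by
  have hagc := hg.fixed_lt_apply_turning
  have hggc := hg.apply_apply_turning_lt_fixed
  set e := max c (g (g c))
  have hea : e < a := max_lt hg.fixed_mem.1 hggc
  have hge : a < g e := hg.fixed_lt_apply ⟨hg.preimage_lt_turning.trans_le (le_max_left _ _), hea⟩
  have hfe : g e ≤ f e := hrep.le_apply (Or.inr ⟨le_max_left _ _, (hea.trans hagc).le⟩) hge
  have hfgc : f (g c) ≤ g (g c) :=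
    hrep.apply_le (Or.inr ⟨hg.turning_le_apply_turning, le_rfl⟩) hggc
  exact sign_sub_self_eq_sign_sub ordConnected_Icc hf hfix hfa
    ⟨le_max_right _ _, (hea.trans hagc).le⟩ hea (hea.trans (hge.trans_le hfe))
    ⟨(hggc.trans hagc).le, le_rfl⟩ hagc ((hfgc.trans_lt hggc).trans hagc) ht

/-- For `x ∈ (a', c)`, pass to the point `ψ_g(x) ∈ [c, a]` with the same image. -/
theorem uIcc_subset_image_of_moreRepellentOn (hg : UnimodalMap g c a a')
    (hf : ContinuousOn f (Icc (g (g c)) (g c))) (hfa : f a = a)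
    (hrep : MoreRepellentOn f g a (Icc (g (g c)) a' ∪ Icc c (g c)))
    (hx : x ∈ Icc (g (g c)) (g c)) : uIcc (g x) a ⊆ f '' uIcc x a := by
  have hxa := ordConnected_Icc.uIcc_subset hx hg.fixed_mem_Icc_apply_turning
  obtain ⟨x', hx'B, hx'x, hgx'⟩ : ∃ x' ∈ Icc (g (g c)) a' ∪ Icc c (g c),
      uIcc x' a ⊆ uIcc x a ∧ g x' = g x := by
    by_cases hxB : x ∈ Icc (g (g c)) a' ∪ Icc c (g c)
    · exact ⟨x, hxB, subset_rfl, rfl⟩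
    simp only [mem_union, mem_Icc, not_or, not_and, not_le] at hxB
    have hxc : x < c := lt_of_not_ge fun h => (hxB.2 h).not_ge hx.2
    have hx' : x ∈ Ioo a' a := ⟨hxB.1 hx.1, hxc.trans hg.fixed_mem.1⟩
    obtain ⟨x', hx', hgx'⟩ := intermediate_value_Icc' hg.fixed_mem.1.le
      (hg.continuousOn.mono (Icc_subset_Icc hg.turning_mem.1.le hg.fixed_mem.2))
      ⟨by rw [hg.map_fixed]; exact (hg.fixed_lt_apply hx').le, hg.apply_le_apply_turning
        ⟨hg.preimage_mem.1.trans hx'.1.le, hx'.2.le.trans hg.fixed_mem.2⟩⟩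
    exact ⟨x', Or.inr ⟨hx'.1, hx'.2.trans hg.fixed_lt_apply_turning.le⟩,
      uIcc_subset_uIcc (mem_uIcc_of_le (hxc.le.trans hx'.1) hx'.2) right_mem_uIcc, hgx'⟩
  calc uIcc (g x) a = uIcc (g x') a := by rw [hgx']
    _ ⊆ uIcc (f x') (f a) := by rw [hfa]; exact hrep x' hx'B
    _ ⊆ f '' uIcc x' a := intermediate_value_uIcc (hf.mono (hx'x.trans hxa))
    _ ⊆ f '' uIcc x a := image_mono hx'x

theorem uIcc_apply_subset_image_of_mem_Ico (hg : UnimodalMap g c a a')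
    (hf : ContinuousOn f (Icc (g (g c)) (g c)))
    (hrep : MoreRepellentOn f g a (Icc (g (g c)) a' ∪ Icc c (g c)))
    (hx : x ∈ Ico (g (g c)) a') : uIcc (g x) a ⊆ f '' uIcc x c := by
  have hagc := hg.fixed_lt_apply_turning
  have hxc : x < c := hx.2.trans hg.preimage_lt_turning
  have hgx : g x < a :=
    hg.apply_lt_fixed_of_lt_preimage ⟨hg.apply_apply_turning_nonneg.trans hx.1, hx.2⟩
  have hfx := hrep.apply_le (Or.inl ⟨hx.1, hx.2.le⟩) hgx
  have hfc := hrep.le_apply (Or.inr ⟨le_rfl, hg.turning_le_apply_turning⟩) hagc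
  have hxc' : uIcc x c ⊆ Icc (g (g c)) (g c) := ordConnected_Icc.uIcc_subset
    ⟨hx.1, hxc.le.trans hg.turning_le_apply_turning⟩
    ⟨hx.1.trans hxc.le, hg.turning_le_apply_turning⟩
  exact (uIcc_subset_uIcc (mem_uIcc_of_le hfx ((hgx.trans hagc).le.trans hfc))
    (mem_uIcc_of_le (hfx.trans hgx.le) (hagc.le.trans hfc))).trans
    (intermediate_value_uIcc (hf.mono hxc'))

/-- `χ` only depends on the sides of `a` on which a point and its image lie. -/
theorem overRotNum_eq_of_iterate_mem_uIcc (hg : UnimodalMap g c a a')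
    (hf : ContinuousOn f (Icc (g (g c)) (g c))) (hfa : f a = a)
    (hfix : ∀ x ∈ Icc (g (g c)) (g c), f x = x → x = a)
    (hrep : MoreRepellentOn f g a (Icc (g (g c)) a' ∪ Icc c (g c)))
    (hy : y ∈ Icc 0 1) (hyp : y ∈ periodicPts g) (hgy : g y ≠ y) {z : ℝ}
    (hz : IsPeriodicPt f (minimalPeriod g y) z) (hza : z ≠ a)
    (hzI : ∀ j ≤ minimalPeriod g y, f^[j] z ∈ uIcc (g^[j] y) a) :
    overRotNum f z = overRotNum g y := by
  have hne : ∀ j ≤ minimalPeriod g y, f^[j] z ≠ a := fun j hj h => hza <| by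
    rw [← hz.eq, ← Nat.sub_add_cancel hj, iterate_add_apply, h, iterate_fixed hfa]
  have hsign : ∀ j ≤ minimalPeriod g y,
      sign (f (f^[j] z) - f^[j] z) = sign (g (g^[j] y) - g^[j] y) := fun j hj => by
    have hzj := ordConnected_Icc.uIcc_subset (hg.iterate_mem_Icc hy hyp hgy j)
      hg.fixed_mem_Icc_apply_turning (hzI j hj)
    rw [hg.sign_apply_sub_self_of_moreRepellentOn hf hfa hfix hrep hzj,
      hg.sign_apply_sub_self (hg.iterate_mem_Ioc hy hyp hgy j),
      sign_sub_eq_of_mem_uIcc (hzI j hj) (hne j hj)]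
  have hchi : ∀ j ∈ Finset.range (minimalPeriod g y), chi f (f^[j] z) = chi g (g^[j] y) :=
    fun j hj => chi_congr (hsign j (Finset.mem_range.1 hj).le)
      (by simpa only [iterate_succ_apply'] using hsign (j + 1) (Finset.mem_range.1 hj))
  rw [overRotNum_eq_of_isPeriodicPt hz (minimalPeriod_pos_of_mem_periodicPts hyp),
    Finset.sum_congr rfl hchi]
  rfl

/-- The intervals `[y, c], [g y, a], [g² y, a], …` form a loop for `f`. -/
theorem exists_overRotNum_eq_of_lt_preimage (hg : UnimodalMap g c a a')
    (hf : ContinuousOn f (Icc (g (g c)) (g c))) (hfa : f a = a)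
    (hfix : ∀ x ∈ Icc (g (g c)) (g c), f x = x → x = a)
    (hrep : MoreRepellentOn f g a (Icc (g (g c)) a' ∪ Icc c (g c)))
    (hy : y ∈ Icc 0 1) (hyp : y ∈ periodicPts g) (hgy : g y ≠ y) (hya : y < a') :
    ∃ z ∈ Icc (g (g c)) (g c), z ∈ periodicPts f ∧ f z ≠ z ∧
      overRotNum f z = overRotNum g y := by
  have hp : 0 < minimalPeriod g y := minimalPeriod_pos_of_mem_periodicPts hyp
  have horb := hg.iterate_mem_Icc hy hyp hgy
  have hyc : y < c := hya.trans hg.preimage_lt_turning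
  have hca := hg.fixed_mem.1
  have hc : c ∈ Icc (g (g c)) (g c) := ⟨(horb 0).1.trans hyc.le, hg.turning_le_apply_turning⟩
  set r : ℕ → ℝ := fun j => if j = 0 then c else a
  have hsub : ∀ j, uIcc (g^[j] y) (r j) ⊆ Icc (g (g c)) (g c) := fun j =>
    ordConnected_Icc.uIcc_subset (horb j) (by
      simp only [r]
      split_ifs
      exacts [hc, hg.fixed_mem_Icc_apply_turning])
  have hcov : ∀ j < minimalPeriod g y,
      uIcc (g^[j + 1] y) (r (j + 1)) ⊆ f '' uIcc (g^[j] y) (r j) := by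
    rintro (_ | j) -
    · exact hg.uIcc_apply_subset_image_of_mem_Ico hf hrep ⟨(horb 0).1, hya⟩
    · rw [iterate_succ_apply']
      exact hg.uIcc_subset_image_of_moreRepellentOn hf hfa hrep (horb _)
  have hyca : uIcc y c ⊆ uIcc y a :=
    uIcc_subset_uIcc left_mem_uIcc (mem_uIcc_of_le hyc.le hca.le)
  have hloop :
      uIcc (g^[0] y) (r 0) ⊆ uIcc (g^[minimalPeriod g y] y) (r (minimalPeriod g y)) := by
    simpa only [r, iterate_zero_apply, iterate_minimalPeriod, if_neg hp.ne', ↓reduceIte]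
      using hyca
  obtain ⟨z, hz, hzI⟩ := exists_isPeriodicPt_of_uIcc_chain (s := fun j => g^[j] y)
    (fun j _ => hf.mono (hsub j)) hcov hloop
  have hz0 : z ∈ uIcc y c := by simpa [r] using hzI 0 hp.le
  have hza : z ≠ a := (hz0.2.trans_lt (max_lt (hyc.trans hca) hca)).ne
  refine ⟨z, hsub 0 hz0, mk_mem_periodicPts hp hz, fun h => hza (hfix z (hsub 0 hz0) h),
    hg.overRotNum_eq_of_iterate_mem_uIcc hf hfa hfix hrep hy hyp hgy hz hza fun j hj => ?_⟩
  rcases eq_or_ne j 0 with rfl | hj0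
  exacts [hyca hz0, by simpa [r, hj0] using hzI j hj]

theorem iterate_succ_lt_fixed_iff (hg : UnimodalMap g c a a') (hy : y ∈ Icc 0 1)
    (hyp : y ∈ periodicPts g) (hgy : g y ≠ y) (hdeep : ∀ i, a' ≤ g^[i] y) (i : ℕ) :
    g^[i + 1] y < a ↔ ¬ g^[i] y < a := by
  rw [iterate_succ_apply']
  by_cases h : g^[i] y < a
  · have := hg.fixed_lt_apply ⟨(hdeep i).lt_of_ne (hg.iterate_ne_preimage hyp hgy i).symm, h⟩
    simp [h, this.not_gt]
  · have hai := (le_of_not_gt h).lt_of_ne (hg.iterate_ne_fixed hyp hgy i).symm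
    simp [h, hg.apply_lt_fixed ⟨hai, (hg.iterate_mem_Ioc hy hyp hgy i).2⟩]

theorem chi_iterate_eq_half (hg : UnimodalMap g c a a') (hy : y ∈ Icc 0 1)
    (hyp : y ∈ periodicPts g) (hgy : g y ≠ y) (hdeep : ∀ i, a' ≤ g^[i] y) (i : ℕ) :
    chi g (g^[i] y) = 1 / 2 := by
  refine if_pos ?_
  rw [← sign_nonpos_iff, sign_mul, hg.sign_apply_sub_self (hg.iterate_mem_Ioc hy hyp hgy i),
    ← iterate_succ_apply' g, hg.sign_apply_sub_self (hg.iterate_mem_Ioc hy hyp hgy (i + 1))]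
  have halt := hg.iterate_succ_lt_fixed_iff hy hyp hgy hdeep i
  have hne := hg.iterate_ne_fixed hyp hgy
  rcases (hne i).lt_or_gt with h | h
  · have h₁ : a < g^[i + 1] y := (le_of_not_gt fun h' => (halt.1 h') h).lt_of_ne (hne _).symm
    rw [sign_pos (sub_pos.2 h), sign_neg (sub_neg.2 h₁)]
    decide
  · rw [sign_neg (sub_neg.2 h), sign_pos (sub_pos.2 (halt.2 h.not_gt))]
    decide

/-- The largest point of an alternating orbit left of `a`, moved into `[c, a)` along its level set
if necessary, is pushed left by `g²`. -/
theorem exists_mem_Ico_apply_apply_le (hg : UnimodalMap g c a a') (hy : y ∈ Icc 0 1)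
    (hyp : y ∈ periodicPts g) (hgy : g y ≠ y) (hdeep : ∀ i, a' ≤ g^[i] y) :
    ∃ e ∈ Ico c a, g (g e) ≤ e ∧ g (g c) ≤ e := by
  have halt := hg.iterate_succ_lt_fixed_iff hy hyp hgy hdeep
  obtain ⟨i, hi, hmax⟩ := exists_iterate_forall_le_of_exists hyp (P := (· < a)) <| by
    by_cases h : y < a
    exacts [⟨0, h⟩, ⟨1, (halt 0).2 h⟩]
  have hgg : g (g (g^[i] y)) ≤ g^[i] y := by
    have hi₁ : ¬ g^[i + 1] y < a := fun h => (halt i).1 h hi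
    simpa only [iterate_succ_apply'] using hmax (i + 2) ((halt (i + 1)).2 hi₁)
  have hggc := (hg.iterate_mem_Icc hy hyp hgy i).1
  rcases le_or_gt c (g^[i] y) with hci | hic
  · exact ⟨g^[i] y, ⟨hci, hi⟩, hgg, hggc⟩
  have hgi : a < g (g^[i] y) :=
    hg.fixed_lt_apply ⟨(hdeep i).lt_of_ne (hg.iterate_ne_preimage hyp hgy i).symm, hi⟩
  obtain ⟨e, he, hge⟩ := intermediate_value_Icc' hg.fixed_mem.1.le
    (hg.continuousOn.mono (Icc_subset_Icc hg.turning_mem.1.le hg.fixed_mem.2))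
    ⟨by rw [hg.map_fixed]; exact hgi.le, hg.apply_le_apply_turning (hg.mapsTo.iterate i hy)⟩
  refine ⟨e, ⟨he.1, he.2.lt_of_ne ?_⟩, ?_, hggc.trans (hic.le.trans he.1)⟩
  · rintro rfl
    exact hgi.ne (hg.map_fixed ▸ hge)
  · rw [hge]
    exact hgg.trans (hic.le.trans he.1)

theorem exists_lt_apply_and_apply_apply_le (hg : UnimodalMap g c a a')
    (hf : ContinuousOn f (Icc (g (g c)) (g c))) (hfa : f a = a)
    (hrep : MoreRepellentOn f g a (Icc (g (g c)) a' ∪ Icc c (g c)))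
    {e : ℝ} (he : e ∈ Ico c a) (hgge : g (g e) ≤ e) (hggc : g (g c) ≤ e) :
    ∃ x ∈ Icc (g (g c)) (g c), x < f x ∧ f (f x) ≤ x := by
  have hagc := hg.fixed_lt_apply_turning
  have hc1 := hg.apply_turning_mem_Icc.2
  have hge : a < g e := hg.fixed_lt_apply ⟨hg.preimage_lt_turning.trans_le he.1, he.2⟩
  have hfe : g e ≤ f e := hrep.le_apply (Or.inr ⟨he.1, he.2.le.trans hagc.le⟩) hge
  have hafe : a < f e := hge.trans_le hfe
  rcases le_or_gt (f e) (g c) with hfe' | hfe'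
  · refine ⟨e, ⟨hggc, he.2.le.trans hagc.le⟩, he.2.trans hafe, ?_⟩
    calc f (f e) ≤ g (f e) := hrep.apply_le (Or.inr ⟨he.1.trans (he.2.trans hafe).le, hfe'⟩)
          (hg.apply_lt_fixed ⟨hafe, hfe'.trans hc1⟩)
      _ ≤ g (g e) := hg.strictAntiOn.antitoneOn
          ⟨(hg.fixed_mem.1.trans hge).le, (hfe.trans hfe').trans hc1⟩
          ⟨(hg.fixed_mem.1.trans hafe).le, hfe'.trans hc1⟩ hfe
      _ ≤ e := hgge
  · obtain ⟨x, hx, hfx⟩ := intermediate_value_Icc' he.2.le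
      (hf.mono (Icc_subset_Icc hggc hagc.le)) ⟨by rw [hfa]; exact hagc.le, hfe'.le⟩
    refine ⟨x, ⟨hggc.trans hx.1, hx.2.trans hagc.le⟩, hfx ▸ hx.2.trans_lt hagc, ?_⟩
    calc f (f x) = f (g c) := by rw [hfx]
      _ ≤ g (g c) := hrep.apply_le (Or.inr ⟨hg.turning_le_apply_turning, le_rfl⟩)
          hg.apply_apply_turning_lt_fixed
      _ ≤ x := hggc.trans hx.1

/-- Orbits of `g` that avoid `[0, a')` alternate around `a`. -/
theorem exists_overRotNum_eq_of_preimage_le (hg : UnimodalMap g c a a')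
    (hf : ContinuousOn f (Icc u v)) (hfm : MapsTo f (Icc u v) (Icc u v))
    (hsub : Icc (g (g c)) (g c) ⊆ Icc u v) (hfa : f a = a)
    (hrep : MoreRepellentOn f g a (Icc (g (g c)) a' ∪ Icc c (g c)))
    (hy : y ∈ Icc 0 1) (hyp : y ∈ periodicPts g) (hgy : g y ≠ y) (hdeep : ∀ i, a' ≤ g^[i] y) :
    ∃ z ∈ Icc u v, z ∈ periodicPts f ∧ f z ≠ z ∧ overRotNum f z = overRotNum g y := by
  obtain ⟨e, he, hgge, hggc⟩ := hg.exists_mem_Ico_apply_apply_le hy hyp hgy hdeep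
  obtain ⟨x, hx, hxf, hffx⟩ :=
    hg.exists_lt_apply_and_apply_apply_le (hf.mono hsub) hfa hrep he hgge hggc
  obtain ⟨z, hz, hz2, hfz⟩ :=
    exists_apply_apply_eq_of_lt_of_apply_apply_le hf hfm (hsub hx) hxf hffx
  have hzp : IsPeriodicPt f 2 z := hz2
  refine ⟨z, hz, mk_mem_periodicPts two_pos hzp, hfz, ?_⟩
  rw [overRotNum_eq_half hyp (hg.chi_iterate_eq_half hy hyp hgy hdeep),
    overRotNum_eq_half (mk_mem_periodicPts two_pos hzp)
      fun i => chi_eq_half_of_apply_apply_eq (hzp.apply_iterate i)]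

theorem overRotInterval_subset (hg : UnimodalMap g c a a')
    (hf : ContinuousOn f (Icc u v)) (hfm : MapsTo f (Icc u v) (Icc u v))
    (hsub : Icc (g (g c)) (g c) ⊆ Icc u v) (hfa : f a = a)
    (hfix : ∀ x ∈ Icc (g (g c)) (g c), f x = x → x = a)
    (hrep : MoreRepellentOn f g a (Icc (g (g c)) a' ∪ Icc c (g c))) :
    overRotInterval g (Icc 0 1) ⊆ overRotInterval f (Icc u v) := by
  refine closure_mono ?_
  rintro _ ⟨y, hy, hyp, hgy, rfl⟩
  by_cases hdeep : ∃ i, g^[i] y < a'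
  · obtain ⟨i, hi⟩ := hdeep
    obtain ⟨z, hz, hzp, hfz, hrot⟩ := hg.exists_overRotNum_eq_of_lt_preimage (hf.mono hsub)
      hfa hfix hrep (hg.mapsTo.iterate i hy) (iterate_mem_periodicPts hyp i)
      (apply_iterate_ne hyp hgy i) hi
    exact ⟨z, hsub hz, hzp, hfz, hrot.trans (overRotNum_iterate hyp i)⟩
  · push Not at hdeep
    exact hg.exists_overRotNum_eq_of_preimage_le hf hfm hsub hfa hrep hy hyp hgy hdeep

end UnimodalMap

theorem stmt8_general (g f : ℝ → ℝ) (c a a' u v : ℝ)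
    (hg : ContinuousOn g (Set.Icc 0 1)) (hgm : Set.MapsTo g (Set.Icc 0 1) (Set.Icc 0 1))
    (hg0 : g 0 = 0) (hg1 : g 1 = 0) (hc : c ∈ Set.Ioo (0:ℝ) 1)
    (hmono : StrictMonoOn g (Set.Icc 0 c)) (hanti : StrictAntiOn g (Set.Icc c 1))
    (ha : a ∈ Set.Ioc c 1) (hga : g a = a)
    (hauniq : ∀ x ∈ Set.Ioc (0:ℝ) 1, g x = x → x = a)
    (ha' : a' ∈ Set.Icc (0:ℝ) c) (hga' : g a' = a)
    (hsub : Set.Icc (g (g c)) (g c) ⊆ Set.Icc u v)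
    (hf : ContinuousOn f (Set.Icc u v)) (hfm : Set.MapsTo f (Set.Icc u v) (Set.Icc u v))
    (hfa : f a = a) (hfuniq : ∀ x ∈ Set.Icc (g (g c)) (g c), f x = x → x = a)
    (h1 : ∀ x ∈ Set.Icc (g (g c)) a', f x ≤ g x)
    (h2 : ∀ x ∈ Set.Icc c a, g x ≤ f x)
    (h3 : ∀ x ∈ Set.Icc a (g c), f x ≤ g x) :
    -- f is more repellent from a than g on B = ψ_g([g²(c), g(c)]) = [g²(c), a'] ∪ [c, g(c)] …
    (∀ x ∈ Set.Icc (g (g c)) a' ∪ Set.Icc c (g c),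
        Set.uIcc (g x) a ⊆ Set.uIcc (f x) a) ∧
    -- … and consequently I_f ⊇ I_g
    overRotInterval g (Set.Icc 0 1) ⊆ overRotInterval f (Set.Icc u v) := by
  have hU : UnimodalMap g c a a' :=
    ⟨hg, hgm, hg0, hg1, hc, hmono, hanti, ha, hga, hauniq, ha', hga'⟩
  have hrep := hU.moreRepellentOn h1 h2 h3
  exact ⟨hrep, hU.overRotInterval_subset hf hfm hsub hfa hfuniq hrep⟩

theorem stmt8 (g f : ℝ → ℝ) (c a a' u v : ℝ)
    (hg : ContinuousOn g (Set.Icc 0 1)) (hgm : Set.MapsTo g (Set.Icc 0 1) (Set.Icc 0 1))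
    (hg0 : g 0 = 0) (hg1 : g 1 = 0) (hc : c ∈ Set.Ioo (0:ℝ) 1)
    (hmono : StrictMonoOn g (Set.Icc 0 c)) (hanti : StrictAntiOn g (Set.Icc c 1))
    (ha : a ∈ Set.Ioc c 1) (hga : g a = a)
    (hauniq : ∀ x ∈ Set.Ioc (0:ℝ) 1, g x = x → x = a)
    (ha' : a' ∈ Set.Icc (0:ℝ) c) (hga' : g a' = a)
    (ha'uniq : ∀ x ∈ Set.Icc (0:ℝ) c, g x = a → x = a')
    (huv : Set.Icc u v ⊆ Set.Icc (0:ℝ) 1) (huv' : u ≤ v)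
    (hsub : Set.Icc (g (g c)) (g c) ⊆ Set.Icc u v)
    (hf : ContinuousOn f (Set.Icc u v)) (hfm : Set.MapsTo f (Set.Icc u v) (Set.Icc u v))
    (hfpm : PiecewiseMonotoneOn f u v)
    (hfa : f a = a) (hfuniq : ∀ x ∈ Set.Icc (g (g c)) (g c), f x = x → x = a)
    (h1 : ∀ x ∈ Set.Icc (g (g c)) a', f x ≤ g x)
    (h2 : ∀ x ∈ Set.Icc c a, g x ≤ f x)
    (h3 : ∀ x ∈ Set.Icc a (g c), f x ≤ g x) :
    -- f is more repellent from a than g on B = ψ_g([g²(c), g(c)]) = [g²(c), a'] ∪ [c, g(c)] …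
    (∀ x ∈ Set.Icc (g (g c)) a' ∪ Set.Icc c (g c),
        Set.uIcc (g x) a ⊆ Set.uIcc (f x) a) ∧
    -- … and consequently I_f ⊇ I_g
    overRotInterval g (Set.Icc 0 1) ⊆ overRotInterval f (Set.Icc u v) :=
  stmt8_general g f c a a' u v hg hgm hg0 hg1 hc hmono hanti ha hga hauniq ha' hga' hsub hf hfm hfa
    hfuniq h1 h2 h3
end

section
/- Let f,g∈ℋ with f(x)≥g(x) for all x∈[0,1] and f≠g. Let 0<v≤1 and define h:[0,v]→ℝ by h(x)=v·f(x/v) (the conjugate of f by the linear contraction x↦v·x fixing 0). If there exists δ>0 such that h(x)≤g(x) for all x∈(0,δ), then h'(0)=f'(0)=g'(0), and either v=1 and f=g=h, or h(x)<g(x) for all x∈(0,v]. -/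
/-!
Both `f` and its contraction `h = v f(·/v)` leave `0` with slope `f'(0)`, so the squeeze
`h ≤ g ≤ f` near `0` forces `g'(0) = f'(0)`; for `v = 1` it even gives `f = g` on an interval,
so `v < 1`. Then `g - h` vanishes to second order at `0` and, being a cubic, equals
`x² (A + B x)`. Its nonnegativity near `0` gives `A ≥ 0`, and at `v` it equals `g(v) > 0`,
because `g = x (1 - x) ℓ(x)` with `ℓ` affine and `ℓ ≥ 0` on `(0,1)` cannot vanish inside
`(0,1)` unless `g = 0`. An affine factor that is `≥ 0` at `0` and `> 0` at `v` is positive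
on `(0, v]`.
-/

open Set Polynomial

/-- The class ℋ: nonzero real polynomials of degree at most 3 with `f(0)=f(1)=0`,
nonnegative on `[0,1]`, and with exactly one critical point `c` in `[0,1]`. -/
structure HClass (f : Polynomial ℝ) (c : ℝ) : Prop where
  deg : f.degree ≤ 3
  ne0 : f ≠ 0
  f0 : f.eval 0 = 0
  f1 : f.eval 1 = 0
  nonneg : ∀ x ∈ Set.Icc (0:ℝ) 1, 0 ≤ f.eval x
  hc : c ∈ Set.Icc (0:ℝ) 1
  crit : f.derivative.eval c = 0
  uniq : ∀ y ∈ Set.Icc (0:ℝ) 1, f.derivative.eval y = 0 → y = c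

open Filter Topology

theorem HasDerivAt.le_of_eventually_le_nhdsGT {φ ψ : ℝ → ℝ} {φ' ψ' a : ℝ}
    (hφ : HasDerivAt φ φ' a) (hψ : HasDerivAt ψ ψ' a) (ha : φ a = ψ a)
    (hle : ∀ᶠ x in 𝓝[>] a, φ x ≤ ψ x) : φ' ≤ ψ' := by
  have hslope := (hψ.sub hφ).hasDerivWithinAt (s := Ioi a)
  rw [hasDerivWithinAt_iff_tendsto_slope, sdiff_singleton_eq_self self_notMem_Ioi] at hslope
  refine sub_nonneg.mp (ge_of_tendsto hslope ?_)
  filter_upwards [hle, self_mem_nhdsWithin] with x hx hax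
  rw [slope_def_field, Pi.sub_apply, Pi.sub_apply, ha, sub_self, sub_zero]
  exact div_nonneg (sub_nonneg.mpr hx) (sub_nonneg.mpr (le_of_lt hax))

theorem HasDerivAt.const_mul_comp_div {𝕜 : Type*} [NontriviallyNormedField 𝕜]
    {φ : 𝕜 → 𝕜} {φ' v x : 𝕜} (hv : v ≠ 0)
    (hφ : HasDerivAt φ φ' (x / v)) : HasDerivAt (fun y => v * φ (y / v)) φ' x := by
  have hcomp := (hφ.comp x ((hasDerivAt_id x).div_const v)).const_mul v
  rwa [mul_comm φ', one_div, mul_inv_cancel_left₀ hv] at hcomp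

namespace Polynomial

theorem eval_eq_of_degree_le_three {R : Type*} [CommSemiring R] {p : R[X]} (hp : p.degree ≤ 3) (x : R) :
    p.eval x = p.coeff 0 + p.coeff 1 * x + p.coeff 2 * x ^ 2 + p.coeff 3 * x ^ 3 := by
  rw [eval_eq_sum_range' (Nat.lt_succ_of_le (natDegree_le_iff_degree_le.mpr hp))]
  simp [Finset.sum_range_succ]

theorem eval_eq_mul_one_sub_mul {R : Type*} [CommRing R] {p : R[X]} (hp : p.degree ≤ 3)
    (h0 : p.eval 0 = 0) (h1 : p.eval 1 = 0) (x : R) : p.eval x = x * (1 - x) * (p.coeff 1 - p.coeff 3 * x) := by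
  have hc0 : p.coeff 0 = 0 := by rw [coeff_zero_eq_eval_zero, h0]
  have hsum := eval_eq_of_degree_le_three hp 1
  rw [h1, hc0] at hsum
  rw [eval_eq_of_degree_le_three hp x, hc0]
  linear_combination (-x ^ 2) * hsum

theorem eval_pos_of_degree_le_three {p : ℝ[X]} (hp : p.degree ≤ 3) (hne : p ≠ 0)
    (h0 : p.eval 0 = 0) (h1 : p.eval 1 = 0) (hnonneg : ∀ x ∈ Icc (0 : ℝ) 1, 0 ≤ p.eval x)
    {v : ℝ} (hv : v ∈ Ioo 0 1) : 0 < p.eval v := by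
  obtain ⟨hv0, hv1⟩ := hv
  refine (hnonneg v ⟨hv0.le, hv1.le⟩).lt_of_ne fun hpv => hne ?_
  have hp_eq := eval_eq_mul_one_sub_mul hp h0 h1
  set a := p.coeff 1
  set b := p.coeff 3
  have ha : a = b * v := by
    have hprod : v * (1 - v) * (a - b * v) = 0 := by rw [← hp_eq, hpv]
    have := (mul_eq_zero.mp hprod).resolve_left (mul_pos hv0 (sub_pos.mpr hv1)).ne'
    linarith
  -- `a - b x` vanishes at `v` but is `≥ 0` on both sides of it, so it has no slope
  have hb : b = 0 := by
    have hl := hnonneg (v / 2) ⟨by linarith, by linarith⟩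
    have hr := hnonneg ((1 + v) / 2) ⟨by linarith, by linarith⟩
    rw [hp_eq, ha] at hl hr
    have hl' : 0 ≤ b * (v ^ 2 * (2 - v)) := by linarith
    have hr' : 0 ≤ -b * ((1 + v) * (1 - v) ^ 2) := by linarith
    exact le_antisymm
      (neg_nonneg.mp (nonneg_of_mul_nonneg_left hr' (by nlinarith)))
      (nonneg_of_mul_nonneg_left hl' (by nlinarith))
  refine Polynomial.funext fun x => ?_
  rw [hp_eq, ha, hb]
  simp

theorem exists_eval_sub_mul_eval_div_eq {K : Type*} [Field K] {f g : K[X]}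
    (hf : f.degree ≤ 3) (hg : g.degree ≤ 3) (hf0 : f.eval 0 = 0) (hg0 : g.eval 0 = 0)
    (hslope : f.derivative.eval 0 = g.derivative.eval 0) {v : K} (hv : v ≠ 0) :
    ∃ A B : K, ∀ x, g.eval x - v * f.eval (x / v) = x ^ 2 * (A + B * x) := by
  have hc0 (p : K[X]) (hp0 : p.eval 0 = 0) : p.coeff 0 = 0 := by rwa [coeff_zero_eq_eval_zero]
  have hc1 : f.coeff 1 = g.coeff 1 := by
    simpa [← coeff_zero_eq_eval_zero, coeff_derivative] using hslope
  refine ⟨g.coeff 2 - f.coeff 2 / v, g.coeff 3 - f.coeff 3 / v ^ 2, fun x => ?_⟩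
  rw [eval_eq_of_degree_le_three hf, eval_eq_of_degree_le_three hg, hc0 f hf0, hc0 g hg0, hc1]
  field_simp
  ring

end Polynomial

theorem pos_of_eventually_nonneg_sq_mul_affine {A B v x : ℝ}
    (hnonneg : ∀ᶠ y in 𝓝[>] 0, 0 ≤ y ^ 2 * (A + B * y)) (hv : 0 < v ^ 2 * (A + B * v))
    (hx : x ∈ Ioc 0 v) : 0 < x ^ 2 * (A + B * x) := by
  have hA : 0 ≤ A := by
    have hlim : Tendsto (fun y => A + B * y) (𝓝[>] 0) (𝓝 A) :=
      ((by fun_prop : Continuous fun y : ℝ => A + B * y).tendsto' 0 A (by simp)).mono_left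
        nhdsWithin_le_nhds
    refine ge_of_tendsto hlim ?_
    filter_upwards [hnonneg, self_mem_nhdsWithin] with y hy hy0
    exact nonneg_of_mul_nonneg_right hy (pow_pos hy0 2)
  have hAv : 0 < A + B * v := pos_of_mul_pos_right hv (sq_nonneg v)
  obtain ⟨hx0, hxv⟩ := hx
  have hAx : 0 < A + B * x := by nlinarith
  positivity

theorem stmt13 (f g : Polynomial ℝ) (cf cg : ℝ) (hf : HClass f cf) (hg : HClass g cg)
    (hge : ∀ x ∈ Set.Icc (0:ℝ) 1, g.eval x ≤ f.eval x) (hfg : f ≠ g)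
    (v : ℝ) (hv0 : 0 < v) (hv1 : v ≤ 1)
    (h : ℝ → ℝ) (hh : h = fun x => v * f.eval (x / v))
    (hle : ∃ δ > 0, ∀ x ∈ Set.Ioo (0:ℝ) δ, h x ≤ g.eval x) :
    deriv h 0 = f.derivative.eval 0 ∧ f.derivative.eval 0 = g.derivative.eval 0 ∧
      ((v = 1 ∧ f = g ∧ (∀ x, h x = f.eval x)) ∨
        (∀ x ∈ Set.Ioc (0:ℝ) v, h x < g.eval x)) := by
  obtain ⟨δ, hδ, hle⟩ := hle
  subst hh
  have hnear : ∀ᶠ x in 𝓝[>] 0, v * f.eval (x / v) ≤ g.eval x :=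
    eventually_of_mem (Ioo_mem_nhdsGT hδ) hle
  have hderiv : HasDerivAt (fun x => v * f.eval (x / v)) (f.derivative.eval 0) 0 := by
    simpa using (f.hasDerivAt (0 / v)).const_mul_comp_div hv0.ne'
  have hgf : ∀ᶠ x in 𝓝[>] 0, g.eval x ≤ f.eval x :=
    eventually_of_mem (Ioo_mem_nhdsGT one_pos) fun x hx => hge x (Ioo_subset_Icc_self hx)
  have hslope : f.derivative.eval 0 = g.derivative.eval 0 := le_antisymm
    (hderiv.le_of_eventually_le_nhdsGT (g.hasDerivAt 0) (by simp [hf.f0, hg.f0]) hnear)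
    ((g.hasDerivAt 0).le_of_eventually_le_nhdsGT (f.hasDerivAt 0) (by simp [hf.f0, hg.f0]) hgf)
  refine ⟨hderiv.deriv, hslope, Or.inr fun x hx => ?_⟩
  have hv1 : v < 1 := by
    refine hv1.lt_of_ne fun hv => hfg (eq_of_infinite_eval_eq f g ?_)
    subst hv
    refine (Ioo_infinite (lt_min hδ one_pos)).mono fun y hy => le_antisymm ?_ ?_
    · simpa using hle y ⟨hy.1, hy.2.trans_le (min_le_left _ _)⟩
    · exact hge y ⟨hy.1.le, (hy.2.trans_le (min_le_right _ _)).le⟩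
  obtain ⟨A, B, hAB⟩ :=
    exists_eval_sub_mul_eval_div_eq hf.deg hg.deg hf.f0 hg.f0 hslope hv0.ne'
  have hgv := eval_pos_of_degree_le_three hg.deg hg.ne0 hg.f0 hg.f1 hg.nonneg ⟨hv0, hv1⟩
  have hhv : v * f.eval (v / v) = 0 := by rw [div_self hv0.ne', hf.f1, mul_zero]
  have hpos : 0 < x ^ 2 * (A + B * x) :=
    pos_of_eventually_nonneg_sq_mul_affine (hnear.mono fun y hy => by linarith [hAB y])
      (by linarith [hAB v]) hx
  linarith [hAB x]
end

section
/- Let f,g∈ℋ with f(x)≥g(x) for all x∈[0,1] and f≠g. Let 0<v≤1 and define h:[0,v]→ℝ by h(x)=v·f(x/v). Suppose that for every δ>0 there exists x∈(0,δ) with h(x)>g(x). Then either v=1 and h=f>g on (0,1), or v<1 and there exists u∈(0,v) such that h(x)>g(x) for x∈(0,u), h(x)<g(x) for x∈(u,v], and h'(u)≤g'(u). -/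
open Set Polynomial

/-!
Put `P(x) = v f(x/v) - g(x)`, a polynomial of degree at most 3 with `P(0) = 0`.
Every such cubic with a second root `s ≠ 0` factors as `x (x - s) (a x + b)`, so its sign is
governed by the affine factor `a x + b`.

If `v = 1`, then `P = f - g ≥ 0` on `[0,1]` vanishes at `0` and `1`, forcing `a x + b ≤ 0` on
`(0,1)`; a zero of the affine factor inside `(0,1)` would make it vanish identically, so `P > 0`.

If `v < 1`, then `P(v) = -g(v) < 0` by the same argument applied to `g`, while `P > 0` at points arbitrarily close to `0`.
At the first root `u` of `P` in `(0,v]` we get `P = x (x - u) (a x + b)` with `a x + b < 0` on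
`(0,u)` and at `v`, hence on all of `(0,v]`. This gives `P < 0` on `(u,v]` and
`P'(u) = u (a u + b) < 0`.
-/

lemma mul_add_neg_of_mem_Icc {a b p q x : ℝ} (hx : x ∈ Icc p q)
    (hp : a * p + b < 0) (hq : a * q + b < 0) : a * x + b < 0 := by
  obtain ⟨hpx, hxq⟩ := hx
  rcases le_total 0 a with ha | ha <;> nlinarith

lemma eq_zero_of_mul_add_nonpos_of_eq_zero {a b p q x : ℝ}
    (hnp : ∀ y ∈ Ioo p q, a * y + b ≤ 0) (hx : x ∈ Ioo p q) (h : a * x + b = 0) :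
    a = 0 ∧ b = 0 := by
  obtain ⟨hpx, hxq⟩ := hx
  have hleft := hnp ((p + x) / 2) ⟨by linarith, by linarith⟩
  have hright := hnp ((x + q) / 2) ⟨by linarith, by linarith⟩
  have ha : a = 0 := by nlinarith
  exact ⟨ha, by simpa [ha] using h⟩

namespace Polynomial

lemma exists_eval_eq_mul_eval_div {K : Type*} [Field K] (f : K[X]) (v : K) :
    ∃ F : K[X], F.natDegree ≤ f.natDegree ∧ ∀ x, F.eval x = v * f.eval (x / v) :=
  ⟨C v * f.comp (C v⁻¹ * X),
    (natDegree_C_mul_le _ _).trans (natDegree_comp_le.trans <|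
      (Nat.mul_le_mul_left _ ((natDegree_C_mul_le _ _).trans natDegree_X_le)).trans_eq
        (mul_one _)),
    fun x => by simp [div_eq_inv_mul]⟩

lemma exists_eq_X_mul_X_sub_C_mul_linear {d : ℝ[X]} (hdeg : d.degree ≤ 3) {s : ℝ}
    (hs : s ≠ 0) (h0 : d.eval 0 = 0) (hds : d.eval s = 0) :
    ∃ a b : ℝ, d = X * (X - C s) * (C a * X + C b) := by
  obtain ⟨q, rfl⟩ : X ∣ d := X_dvd_iff.mpr (by rwa [coeff_zero_eq_eval_zero])
  have hqs : q.IsRoot s := by simpa [hs] using hds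
  obtain ⟨L, rfl⟩ := dvd_iff_isRoot.mpr hqs
  by_cases hL : L = 0
  · exact ⟨0, 0, by simp [hL]⟩
  have hL1 : L.natDegree ≤ 1 := by
    have h3 : _ ≤ 3 := natDegree_le_iff_degree_le.mpr hdeg
    rw [natDegree_mul X_ne_zero (mul_ne_zero (X_sub_C_ne_zero s) hL),
      natDegree_mul (X_sub_C_ne_zero s) hL, natDegree_X, natDegree_X_sub_C] at h3
    omega
  exact ⟨L.coeff 1, L.coeff 0, by rw [mul_assoc, ← eq_X_add_C_of_natDegree_le_one hL1]⟩

lemma eval_pos_of_degree_le_three_of_nonneg {d : ℝ[X]} (hd : d ≠ 0) (hdeg : d.degree ≤ 3)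
    (h0 : d.eval 0 = 0) (h1 : d.eval 1 = 0) (hnn : ∀ x ∈ Icc (0 : ℝ) 1, 0 ≤ d.eval x)
    {x : ℝ} (hx : x ∈ Ioo (0 : ℝ) 1) : 0 < d.eval x := by
  obtain ⟨a, b, rfl⟩ := exists_eq_X_mul_X_sub_C_mul_linear hdeg one_ne_zero h0 h1
  have hquad : ∀ y ∈ Ioo (0 : ℝ) 1, y * (y - 1) < 0 := fun y hy =>
    mul_neg_of_pos_of_neg hy.1 (by linarith [hy.2])
  have hlin : ∀ y ∈ Ioo (0 : ℝ) 1, a * y + b ≤ 0 := fun y hy =>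
    nonpos_of_mul_nonneg_right (by simpa using hnn y (Ioo_subset_Icc_self hy)) (hquad y hy)
  have hlinx : a * x + b < 0 := by
    refine (hlin x hx).lt_of_ne fun hzero => hd ?_
    obtain ⟨rfl, rfl⟩ := eq_zero_of_mul_add_nonpos_of_eq_zero hlin hx hzero
    simp
  simpa using mul_pos_of_neg_of_neg (hquad x hx) hlinx

lemma exists_first_root_of_frequently_pos {P : ℝ[X]} {v : ℝ} (hv : 0 < v)
    (hPv : P.eval v < 0) (hpos : ∀ δ > 0, ∃ x ∈ Ioo 0 δ, 0 < P.eval x) :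
    ∃ u ∈ Ioo 0 v, P.eval u = 0 ∧ ∀ x ∈ Ioo 0 u, 0 < P.eval x := by
  have hP : P ≠ 0 := by rintro rfl; simp at hPv
  set S := {x | x ∈ Ioc 0 v ∧ P.IsRoot x}
  have root_le : ∀ x ∈ Ioc 0 v, P.eval x ≤ 0 → ∃ y ∈ S, y ≤ x := by
    intro x hx hPx
    obtain ⟨p, hp, hPp⟩ := hpos x hx.1
    obtain ⟨y, hy, hPy⟩ := intermediate_value_Ioc' hp.2.le P.continuous.continuousOn ⟨hPx, hPp⟩
    exact ⟨y, ⟨⟨hp.1.trans hy.1, hy.2.trans hx.2⟩, hPy⟩, hy.2⟩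
  have hSfin : S.Finite := (finite_setOfPred_isRoot hP).subset fun x hx => hx.2
  obtain ⟨z, hzS, -⟩ := root_le v ⟨hv, le_rfl⟩ hPv.le
  obtain ⟨u, ⟨⟨hu0, huv⟩, hPu⟩, hmin⟩ := S.exists_min_image id hSfin ⟨z, hzS⟩
  have huv' : u < v := huv.lt_of_ne <| by rintro rfl; exact hPv.ne hPu
  refine ⟨u, ⟨hu0, huv'⟩, hPu, fun x hx => ?_⟩
  by_contra! hPx
  obtain ⟨y, hyS, hyx⟩ := root_le x ⟨hx.1, hx.2.le.trans huv⟩ hPx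
  exact (hmin y hyS).not_gt (hyx.trans_lt hx.2)

lemma exists_sign_change_of_degree_le_three {P : ℝ[X]} (hdeg : P.degree ≤ 3)
    (h0 : P.eval 0 = 0) {v : ℝ} (hv : 0 < v) (hPv : P.eval v < 0)
    (hpos : ∀ δ > 0, ∃ x ∈ Ioo 0 δ, 0 < P.eval x) :
    ∃ u ∈ Ioo 0 v, (∀ x ∈ Ioo 0 u, 0 < P.eval x) ∧ (∀ x ∈ Ioc u v, P.eval x < 0) ∧
      P.derivative.eval u < 0 := by
  obtain ⟨u, hu, hPu, hposu⟩ := exists_first_root_of_frequently_pos hv hPv hpos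
  obtain ⟨a, b, rfl⟩ := exists_eq_X_mul_X_sub_C_mul_linear hdeg hu.1.ne' h0 hPu
  simp only [eval_mul, eval_X, eval_sub, eval_C, eval_add] at hposu hPv ⊢
  have hmid : a * (u / 2) + b < 0 :=
    neg_of_mul_pos_right (hposu (u / 2) ⟨by linarith [hu.1], by linarith [hu.1]⟩)
      (mul_neg_of_pos_of_neg (by linarith [hu.1]) (by linarith [hu.1])).le
  have hend : a * v + b < 0 :=
    neg_of_mul_neg_right hPv (mul_pos hv (by linarith [hu.2])).le
  have hlin : ∀ x ∈ Icc (u / 2) v, a * x + b < 0 := fun x hx =>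
    mul_add_neg_of_mem_Icc hx hmid hend
  refine ⟨u, hu, hposu, fun x hx => ?_, ?_⟩
  · exact mul_neg_of_pos_of_neg (mul_pos (by linarith [hu.1, hx.1]) (by linarith [hx.1]))
      (hlin x ⟨by linarith [hu.1, hx.1], hx.2⟩)
  · simpa [derivative_mul] using
      mul_neg_of_pos_of_neg hu.1 (hlin u ⟨by linarith [hu.1], hu.2.le⟩)

end Polynomial

theorem stmt14 (f g : Polynomial ℝ) (cf cg : ℝ) (hf : HClass f cf) (hg : HClass g cg)
    (hge : ∀ x ∈ Set.Icc (0:ℝ) 1, g.eval x ≤ f.eval x) (hfg : f ≠ g)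
    (v : ℝ) (hv0 : 0 < v) (hv1 : v ≤ 1)
    (h : ℝ → ℝ) (hh : h = fun x => v * f.eval (x / v))
    (hgt : ∀ δ > 0, ∃ x ∈ Set.Ioo (0:ℝ) δ, g.eval x < h x) :
    (v = 1 ∧ (∀ x, h x = f.eval x) ∧ (∀ x ∈ Set.Ioo (0:ℝ) 1, g.eval x < f.eval x)) ∨
    (v < 1 ∧ ∃ u ∈ Set.Ioo 0 v,
      (∀ x ∈ Set.Ioo (0:ℝ) u, g.eval x < h x) ∧
      (∀ x ∈ Set.Ioc u v, h x < g.eval x) ∧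
      deriv h u ≤ g.derivative.eval u) := by
  rcases hv1.lt_or_eq with hv1 | rfl
  · obtain ⟨F, hFdeg, hF⟩ := exists_eval_eq_mul_eval_div f v
    obtain rfl : h = fun x => F.eval x := hh.trans (funext fun x => (hF x).symm)
    have hdeg : (F - g).degree ≤ 3 := (degree_sub_le F g).trans <| max_le
      (degree_le_of_natDegree_le (hFdeg.trans (natDegree_le_of_degree_le hf.deg))) hg.deg
    have hgv : 0 < g.eval v :=
      eval_pos_of_degree_le_three_of_nonneg hg.ne0 hg.deg hg.f0 hg.f1 hg.nonneg ⟨hv0, hv1⟩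
    obtain ⟨u, hu, hpos, hneg, hderiv⟩ := exists_sign_change_of_degree_le_three hdeg
      (by simp [hF, hf.f0, hg.f0]) hv0 (by simpa [hF, div_self hv0.ne', hf.f1] using hgv)
      (fun δ hδ => by simpa using hgt δ hδ)
    refine .inr ⟨hv1, u, hu, fun x hx => by simpa using hpos x hx,
      fun x hx => by simpa using hneg x hx, ?_⟩
    rw [Polynomial.deriv]
    simpa using hderiv.le
  · subst hh
    refine .inl ⟨rfl, by simp, fun x hx => ?_⟩
    have hd := eval_pos_of_degree_le_three_of_nonneg (sub_ne_zero.mpr hfg)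
      ((degree_sub_le f g).trans (max_le hf.deg hg.deg)) (by simp [hf.f0, hg.f0])
      (by simp [hf.f1, hg.f1]) (fun y hy => by simpa using hge y hy) hx
    simpa using hd
end

section
/- Let f,g∈ℋ with f(x)≥g(x) for all x∈[0,1] and f≠g. Let γ>0, let x∈(0,1] be a point with g(x)=γ·x and g'(x)≤0, and let z∈(x,1] be a point with f(z)=γ·z. Then f'(z)≤g'(x) (in particular z≥c_f), and x/x'_g < z/z'_f. -/
open Set Polynomial

lemma eval_cubic (h : Polynomial ℝ) (hdeg : h.degree ≤ 3) (t : ℝ) :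
    h.eval t = h.coeff 0 + h.coeff 1 * t + h.coeff 2 * t^2 + h.coeff 3 * t^3 := by
  have h3 : h.natDegree ≤ 3 := Polynomial.natDegree_le_iff_degree_le.mpr (by exact_mod_cast hdeg)
  have hnd : h.natDegree < 4 := by omega
  rw [Polynomial.eval_eq_sum_range' hnd]
  simp only [Finset.sum_range_succ, Finset.sum_range_zero]
  ring

lemma deriv_eval_cubic (h : Polynomial ℝ) (hdeg : h.degree ≤ 3) (t : ℝ) :
    h.derivative.eval t = h.coeff 1 + 2 * h.coeff 2 * t + 3 * h.coeff 3 * t^2 := by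
  have hnd : h.natDegree ≤ 3 := Polynomial.natDegree_le_iff_degree_le.mpr (by exact_mod_cast hdeg)
  have hd : h.derivative.natDegree < 3 := by
    have := Polynomial.natDegree_derivative_le h
    omega
  rw [Polynomial.eval_eq_sum_range' hd]
  simp only [Finset.sum_range_succ, Finset.sum_range_zero, Polynomial.coeff_derivative]
  push_cast
  ring

lemma hclass_deriv_signs {h : Polynomial ℝ} {c : ℝ} (H : HClass h c) :
    (∀ t, 0 ≤ t → t < c → 0 < h.derivative.eval t) ∧
    (∀ t, c < t → t ≤ 1 → h.derivative.eval t < 0) := by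
  obtain ⟨hc0, hc1⟩ := H.hc
  obtain ⟨k, hk⟩ : (X - C c) ∣ h.derivative := Polynomial.dvd_iff_isRoot.mpr H.crit
  have hev : ∀ t : ℝ, h.derivative.eval t = (t - c) * k.eval t := by
    intro t; rw [hk]; simp
  have hne : ∀ t, t ∈ Icc (0:ℝ) 1 → t ≠ c → k.eval t ≠ 0 := by
    intro t ht htc hkt
    exact htc (H.uniq t ht (by rw [hev, hkt]; ring))
  have hkneg : ∀ t, t ∈ Icc (0:ℝ) 1 → t ≠ c → k.eval t < 0 := by
    intro t ht htc
    rcases lt_or_gt_of_ne (hne t ht htc) with hlt | hgt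
    · exact hlt
    · exfalso
      rcases lt_or_gt_of_ne htc with htlt | htgt
      · -- t < c
        have hcpos : 0 < c := lt_of_le_of_lt ht.1 htlt
        have hkpos : ∀ u, 0 ≤ u → u < c → 0 < k.eval u := by
          intro u hu0 huc
          rcases lt_or_gt_of_ne (hne u ⟨hu0, le_trans huc.le hc1⟩ (ne_of_lt huc)) with h' | h'
          · exfalso
            rcases le_total u t with hut | htu
            · obtain ⟨w, hw, hw0⟩ := intermediate_value_Icc hut
                ((Polynomial.continuous k).continuousOn) (⟨h'.le, hgt.le⟩ : (0:ℝ) ∈ Icc (k.eval u) (k.eval t))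
              have hw1 : w ∈ Icc (0:ℝ) 1 := ⟨le_trans hu0 hw.1, le_trans hw.2 (le_trans htlt.le hc1)⟩
              exact hne w hw1 (ne_of_lt (lt_of_le_of_lt hw.2 htlt)) hw0
            · obtain ⟨w, hw, hw0⟩ := intermediate_value_Icc' htu
                ((Polynomial.continuous k).continuousOn) (⟨h'.le, hgt.le⟩ : (0:ℝ) ∈ Icc (k.eval u) (k.eval t))
              have hw1 : w ∈ Icc (0:ℝ) 1 := ⟨le_trans ht.1 hw.1, le_trans hw.2 (le_trans huc.le hc1)⟩
              exact hne w hw1 (ne_of_lt (lt_of_le_of_lt hw.2 huc)) hw0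
          · exact h'
        have hmono : StrictAntiOn (fun t => h.eval t) (Icc 0 (c/2)) := by
          apply strictAntiOn_of_deriv_neg (convex_Icc _ _) ((Polynomial.continuous h).continuousOn)
          intro u hu
          rw [interior_Icc] at hu
          rw [Polynomial.deriv, hev]
          have h1 := hkpos u hu.1.le (by linarith [hu.2])
          nlinarith [hu.1, hu.2]
        have hlt2 : h.eval (c/2) < h.eval 0 :=
          hmono ⟨le_refl 0, by linarith⟩ ⟨by linarith, le_refl _⟩ (by linarith)
        have hnn := H.nonneg (c/2) ⟨by linarith, by linarith⟩
        rw [H.f0] at hlt2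
        linarith
      · -- c < t
        have hc1' : c < 1 := lt_of_lt_of_le htgt ht.2
        have hkpos : ∀ u, c < u → u ≤ 1 → 0 < k.eval u := by
          intro u huc hu1
          rcases lt_or_gt_of_ne (hne u ⟨le_trans hc0 huc.le, hu1⟩ (ne_of_gt huc)) with h' | h'
          · exfalso
            rcases le_total u t with hut | htu
            · obtain ⟨w, hw, hw0⟩ := intermediate_value_Icc hut
                ((Polynomial.continuous k).continuousOn) (⟨h'.le, hgt.le⟩ : (0:ℝ) ∈ Icc (k.eval u) (k.eval t))
              have hw1 : w ∈ Icc (0:ℝ) 1 := ⟨le_trans (le_trans hc0 huc.le) hw.1, le_trans hw.2 ht.2⟩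
              exact hne w hw1 (ne_of_gt (lt_of_lt_of_le huc hw.1)) hw0
            · obtain ⟨w, hw, hw0⟩ := intermediate_value_Icc' htu
                ((Polynomial.continuous k).continuousOn) (⟨h'.le, hgt.le⟩ : (0:ℝ) ∈ Icc (k.eval u) (k.eval t))
              have hw1 : w ∈ Icc (0:ℝ) 1 := ⟨le_trans (le_trans hc0 htgt.le) hw.1, le_trans hw.2 hu1⟩
              exact hne w hw1 (ne_of_gt (lt_of_lt_of_le htgt hw.1)) hw0
          · exact h'
        have hmono : StrictMonoOn (fun t => h.eval t) (Icc ((c+1)/2) 1) := by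
          apply strictMonoOn_of_deriv_pos (convex_Icc _ _) ((Polynomial.continuous h).continuousOn)
          intro u hu
          rw [interior_Icc] at hu
          rw [Polynomial.deriv, hev]
          have h1 := hkpos u (by linarith [hu.1]) (by linarith [hu.2])
          nlinarith [hu.1, hu.2]
        have hlt2 : h.eval ((c+1)/2) < h.eval 1 :=
          hmono ⟨le_refl _, by linarith⟩ ⟨by linarith, le_refl _⟩ (by linarith)
        have hnn := H.nonneg ((c+1)/2) ⟨by linarith, by linarith⟩
        rw [H.f1] at hlt2
        linarith
  constructor
  · intro t ht0 htc
    have hkn := hkneg t ⟨ht0, le_trans htc.le hc1⟩ (ne_of_lt htc)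
    rw [hev]
    nlinarith
  · intro t htc ht1
    have hkn := hkneg t ⟨le_trans hc0 htc.le, ht1⟩ (ne_of_gt htc)
    rw [hev]
    nlinarith

lemma deriv_zero_nonneg (F : Polynomial ℝ) (h0 : F.eval 0 = 0)
    (hpos : ∀ t : ℝ, 0 < t → t ≤ 1 → 0 ≤ F.eval t) : 0 ≤ F.derivative.eval 0 := by
  have hd := F.hasDerivAt (0:ℝ)
  rw [hasDerivAt_iff_tendsto_slope] at hd
  have h2 : Filter.Tendsto (slope (fun t => F.eval t) 0) (nhdsWithin 0 (Set.Ioi 0))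
      (nhds (F.derivative.eval 0)) :=
    hd.mono_left (nhdsWithin_mono 0 (fun u hu => Set.mem_compl_singleton_iff.mpr (ne_of_gt hu)))
  refine ge_of_tendsto h2 ?_
  filter_upwards [Ioc_mem_nhdsGT_of_mem (Set.left_mem_Ico.mpr zero_lt_one)] with t ht
  rw [slope_def_field]
  have h3 := hpos t ht.1 ht.2
  rw [h0]
  apply div_nonneg <;> linarith [ht.1]


set_option maxHeartbeats 1600000 in
theorem stmt15 (f g : Polynomial ℝ) (cf cg : ℝ) (hf : HClass f cf) (hg : HClass g cg)
    (hge : ∀ t ∈ Set.Icc (0:ℝ) 1, g.eval t ≤ f.eval t) (hfg : f ≠ g)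
    (γ : ℝ) (hγ : 0 < γ)
    (x : ℝ) (hx : x ∈ Set.Ioc (0:ℝ) 1) (hgx : g.eval x = γ * x)
    (hgx' : g.derivative.eval x ≤ 0)
    (z : ℝ) (hz : z ∈ Set.Ioc x 1) (hfz : f.eval z = γ * z)
    -- x'_g : the point of [0,1] on the other side of c_g with the same g-value as x
    (x' : ℝ) (hx'm : x' ∈ Set.Icc (0:ℝ) cg) (hx'v : g.eval x' = g.eval x)
    -- z'_f : the point of [0,1] on the other side of c_f with the same f-value as z
    (z' : ℝ) (hz'm : z' ∈ Set.Icc (0:ℝ) cf) (hz'v : f.eval z' = f.eval z) :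
    f.derivative.eval z ≤ g.derivative.eval x ∧ cf ≤ z ∧ x / x' < z / z' := by
  -- coefficient representation of f
  obtain ⟨p, q, hfev, hfdev⟩ : ∃ p q : ℝ, (∀ t : ℝ, f.eval t = t*((1-t)*(p+q*t))) ∧
      (∀ t : ℝ, f.derivative.eval t = (1-t)*(p+q*t) + t*(q-p-2*q*t)) := by
    have hc0 : f.coeff 0 = 0 := by rw [Polynomial.coeff_zero_eq_eval_zero, hf.f0]
    have hsum := eval_cubic f hf.deg 1
    rw [hf.f1] at hsum
    norm_num at hsum
    have hc2 : f.coeff 2 = -f.coeff 1 - f.coeff 3 := by linarith [hc0]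
    exact ⟨f.coeff 1, -f.coeff 3,
      fun t => by rw [eval_cubic f hf.deg t, hc0, hc2]; ring,
      fun t => by rw [deriv_eval_cubic f hf.deg t, hc2]; ring⟩
  -- coefficient representation of g
  obtain ⟨r, s, hgev, hgdev⟩ : ∃ r s : ℝ, (∀ t : ℝ, g.eval t = t*((1-t)*(r+s*t))) ∧
      (∀ t : ℝ, g.derivative.eval t = (1-t)*(r+s*t) + t*(s-r-2*s*t)) := by
    have hc0 : g.coeff 0 = 0 := by rw [Polynomial.coeff_zero_eq_eval_zero, hg.f0]
    have hsum := eval_cubic g hg.deg 1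
    rw [hg.f1] at hsum
    norm_num at hsum
    have hc2 : g.coeff 2 = -g.coeff 1 - g.coeff 3 := by linarith [hc0]
    exact ⟨g.coeff 1, -g.coeff 3,
      fun t => by rw [eval_cubic g hg.deg t, hc0, hc2]; ring,
      fun t => by rw [deriv_eval_cubic g hg.deg t, hc2]; ring⟩
  -- basic point facts
  have hx0 : 0 < x := hx.1
  have hxz : x < z := hz.1
  have hz0 : 0 < z := lt_trans hx0 hxz
  have hx1 : x < 1 := by
    rcases lt_or_eq_of_le hx.2 with h | h
    · exact h
    · exfalso; rw [h] at hgx; rw [hg.f1] at hgx; nlinarith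
  have hz1 : z < 1 := by
    rcases lt_or_eq_of_le hz.2 with h | h
    · exact h
    · exfalso; rw [h] at hfz; rw [hf.f1] at hfz; nlinarith
  have h1 : (1-x)*(r+s*x) = γ := by
    have hh : x*((1-x)*(r+s*x)) = x*γ := by rw [← hgev x, hgx]; ring
    exact mul_left_cancel₀ (ne_of_gt hx0) hh
  have h2 : (1-z)*(p+q*z) = γ := by
    have hh : z*((1-z)*(p+q*z)) = z*γ := by rw [← hfev z, hfz]; ring
    exact mul_left_cancel₀ (ne_of_gt hz0) hh
  have h1' : x'*((1-x')*(r+s*x')) = γ*x := by rw [← hgev x', hx'v, hgx]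
  have h2' : z'*((1-z')*(p+q*z')) = γ*z := by rw [← hfev z', hz'v, hfz]
  have hx'0 : 0 < x' := by
    rcases lt_or_eq_of_le hx'm.1 with h | h
    · exact h
    · exfalso
      have : g.eval x' = 0 := by rw [← h, hg.f0]
      rw [hx'v, hgx] at this
      nlinarith
  have hz'0 : 0 < z' := by
    rcases lt_or_eq_of_le hz'm.1 with h | h
    · exact h
    · exfalso
      have : f.eval z' = 0 := by rw [← h, hf.f0]
      rw [hz'v, hfz] at this
      nlinarith
  have hgsigns := hclass_deriv_signs hg
  have hfsigns := hclass_deriv_signs hf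
  have hcgx : cg ≤ x := by
    by_contra hcon
    push_neg at hcon
    have := hgsigns.1 x hx0.le hcon
    linarith
  have hx'x : x' ≤ x := le_trans hx'm.2 hcgx
  have hx'1 : x' < 1 := lt_of_le_of_lt hx'x hx1
  -- r + s > 0 (since g'(1) < 0)
  have hrs : 0 < r + s := by
    have hcg1 : cg < 1 := lt_of_le_of_lt hcgx hx1
    have hgd1 := hgsigns.2 1 hcg1 le_rfl
    rw [hgdev 1] at hgd1
    nlinarith
  -- p ≥ r
  have hpr : r ≤ p := by
    have hdeg : (f - g).degree ≤ 3 := le_trans (Polynomial.degree_sub_le f g) (max_le hf.deg hg.deg)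
    have key := deriv_zero_nonneg (f - g)
      (by rw [Polynomial.eval_sub, hf.f0, hg.f0]; ring)
      (fun t ht0 ht1 => by
        rw [Polynomial.eval_sub]
        have := hge t ⟨ht0.le, ht1⟩
        linarith)
    rw [Polynomial.derivative_sub, Polynomial.eval_sub, hfdev 0, hgdev 0] at key
    nlinarith
  -- Part 1
  have hmaster : (1-x)^2*(1-z)*(x*(s-r-2*s*x) - z*(q-p-2*q*z))
      = (1-x)^2*(1-z)^2*(p-r) + x*(1-z)*(z-x)*(1-x)*(r+s) + γ*(z-x)^2 := by
    linear_combination (1-2*z-2*x+z^2+2*x*z+2*x^2-2*x^2*z)*h1 + (-1+2*z+2*x-4*x*z-x^2+2*x^2*z)*h2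
  have hDelta : z*(q-p-2*q*z) < x*(s-r-2*s*x) := by
    have e1 : 0 ≤ (1-x)^2*(1-z)^2*(p-r) := by
      apply mul_nonneg
      · positivity
      · linarith
    have e2 : 0 < x*(1-z)*(z-x)*(1-x)*(r+s) :=
      mul_pos (mul_pos (mul_pos (mul_pos hx0 (by linarith)) (by linarith)) (by linarith)) hrs
    have e3 : 0 < γ*(z-x)^2 := mul_pos hγ (pow_pos (by linarith : (0:ℝ) < z-x) 2)
    have efac : 0 < (1-x)^2*(1-z) := mul_pos (pow_pos (by linarith : (0:ℝ) < 1-x) 2) (by linarith)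
    by_contra hcon
    push_neg at hcon
    have hsum : 0 < (1-x)^2*(1-z)^2*(p-r) + x*(1-z)*(z-x)*(1-x)*(r+s) + γ*(z-x)^2 := by
      linarith
    rw [← hmaster] at hsum
    have hle : (1-x)^2*(1-z)*(x*(s-r-2*s*x) - z*(q-p-2*q*z)) ≤ 0 :=
      mul_nonpos_of_nonneg_of_nonpos efac.le (by linarith)
    linarith
  have hfdz : f.derivative.eval z = γ + z*(q-p-2*q*z) := by rw [hfdev z, h2]
  have hgdx : g.derivative.eval x = γ + x*(s-r-2*s*x) := by rw [hgdev x, h1]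
  have goal1 : f.derivative.eval z ≤ g.derivative.eval x := by
    rw [hfdz, hgdx]; linarith
  have hfz_neg : f.derivative.eval z < 0 := by
    rw [hgdx] at hgx'
    rw [hfdz]; linarith
  have hcfz : cf < z := by
    rcases lt_trichotomy z cf with h | h | h
    · exfalso
      have := hfsigns.1 z hz0.le h
      linarith
    · exfalso
      rw [h, hf.crit] at hfz_neg
      exact lt_irrefl 0 hfz_neg
    · exact h
  have hz'z : z' < z := lt_of_le_of_lt hz'm.2 hcfz
  have hz'1 : z' < 1 := lt_of_lt_of_le hz'z hz.2
  refine ⟨goal1, hcfz.le, ?_⟩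
  -- Part 3
  rcases eq_or_lt_of_le hx'x with heq | hxx'
  · -- x' = x
    rw [heq, div_self (ne_of_gt hx0)]
    exact (one_lt_div hz'0).mpr hz'z
  · -- x' < x
    by_contra hcon
    push_neg at hcon
    have hzx' : z*x' ≤ x*z' := by
      rw [div_le_div_iff₀ hz'0 hx'0] at hcon
      linarith
    obtain ⟨k, hk0, hk⟩ : ∃ k : ℝ, 0 < k ∧ x' = k * x :=
      ⟨x'/x, div_pos hx'0 hx0, by field_simp⟩
    rw [hk] at hxx'
    have hk1 : k < 1 := by
      by_contra hc
      push_neg at hc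
      have hh : x ≤ k*x := le_mul_of_one_le_left hx0.le hc
      linarith
    have hkx0 : 0 < k*x := by rw [← hk]; exact hx'0
    have hkx1 : k*x < 1 := by rw [← hk]; exact hx'1
    have hkz : k*z ≤ z' := by
      rw [hk] at hzx'
      by_contra hc
      push_neg at hc
      have hh := mul_lt_mul_of_pos_right hc hx0
      have e : z*(k*x) = (k*z)*x := by ring
      rw [e] at hzx'
      linarith
    have hkz0 : 0 < k*z := mul_pos hk0 hz0
    have hkz1 : k*z < 1 := lt_of_le_of_lt hkz hz'1
    have hxkx : 0 < x - k*x := by linarith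
    have h1k : (k*x)*((1-(k*x))*(r+s*(k*x))) = γ*x := by rw [← hk]; exact h1'
    have hrD : r*((1-x)*(k*x)*(1-(k*x))) = γ*((x+(k*x))*(1-x-(k*x))+x*(k*x)) := by
      apply mul_right_cancel₀ (ne_of_gt hxkx)
      linear_combination (-((k*x)^2*(1-(k*x))))*h1 + (x*(1-x))*h1k
    have hrsD : (r+s)*((1-x)*(k*x)*(1-(k*x))) = γ*(x*(k*x)-(1-x-(k*x))^2) := by
      apply mul_right_cancel₀ (ne_of_gt hxkx)
      linear_combination ((k*x)*(1-(k*x))^2)*h1 + (-(1-x)^2)*h1k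
    have hzz' : z - z' ≠ 0 := sub_ne_zero.mpr (ne_of_gt hz'z)
    have hpD : p*((1-z)*z'*(1-z')) = γ*((z+z')*(1-z-z')+z*z') := by
      apply mul_right_cancel₀ hzz'
      linear_combination (-(z'^2*(1-z')))*h2 + (z*(1-z))*h2'
    have hDgk : 0 < (1-x)*(k*x)*(1-(k*x)) :=
      mul_pos (mul_pos (by linarith) hkx0) (by linarith)
    have hDf : 0 < (1-z)*z'*(1-z') :=
      mul_pos (mul_pos (by linarith) hz'0) (by linarith)
    have hAg : 0 < x*(k*x)-(1-x-(k*x))^2 := by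
      have h0 : 0 < γ*(x*(k*x)-(1-x-(k*x))^2) := by
        rw [← hrsD]; exact mul_pos hrs hDgk
      by_contra hc
      push_neg at hc
      have hh := mul_nonpos_of_nonneg_of_nonpos hγ.le hc
      linarith
    have hPhi : 0 < -1 + (1+k)*(x+z) - (1+k+k^2)*x*z := by
      have hid : (1-x)*(-1 + (1+k)*(x+z) - (1+k+k^2)*x*z)
          = (1-z)*(x*(k*x)-(1-x-(k*x))^2) + (z-x)*(k*(1-k*x)) := by ring
      have t1 : 0 < (1-z)*(x*(k*x)-(1-x-(k*x))^2) := mul_pos (by linarith) hAg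
      have t2 : 0 < (z-x)*(k*(1-k*x)) := mul_pos (by linarith) (mul_pos hk0 (by linarith))
      by_contra hc
      push_neg at hc
      have hh := mul_nonpos_of_nonneg_of_nonpos (by linarith : (0:ℝ) ≤ 1-x) hc
      rw [hid] at hh
      linarith
    have hC2 : ((z+k*z)*(1-z-k*z)+z*(k*z)) * ((1-x)*(k*x)*(1-(k*x)))
        < ((x+k*x)*(1-x-(k*x))+x*(k*x)) * ((1-z)*(k*z)*(1-(k*z))) := by
      have hid : ((x+k*x)*(1-x-(k*x))+x*(k*x)) * ((1-z)*(k*z)*(1-(k*z)))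
          - ((z+k*z)*(1-z-k*z)+z*(k*z)) * ((1-x)*(k*x)*(1-(k*x)))
          = k^2*x*z*(z-x)*(-1 + (1+k)*(x+z) - (1+k+k^2)*x*z) := by ring
      have hpos : 0 < k^2*x*z*(z-x)*(-1 + (1+k)*(x+z) - (1+k+k^2)*x*z) :=
        mul_pos (mul_pos (mul_pos (mul_pos (pow_pos hk0 2) hx0) hz0) (by linarith)) hPhi
      linarith
    have hB : 0 < (1-(k*z))*(1-z') - z*(1-(k*z)-z') := by
      have hidB : (1-(k*z))*(1-z') - z*(1-(k*z)-z') = (1-z)*(1-(k*z)-z') + (k*z)*z' := by ring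
      rcases le_or_gt (1-(k*z)-z') 0 with hc | hc
      · have P1 := mul_pos (by linarith : (0:ℝ) < 1-(k*z)) (by linarith : (0:ℝ) < 1-z')
        have P2 := mul_nonpos_of_nonneg_of_nonpos hz0.le hc
        linarith [hidB, P1, P2]
      · have P1 := mul_pos (by linarith : (0:ℝ) < 1-z) hc
        have P2 := mul_pos hkz0 hz'0
        linarith [hidB, P1, P2]
    have hC1 : ((z+z')*(1-z-z')+z*z') * ((1-z)*(k*z)*(1-(k*z)))
        ≤ ((z+(k*z))*(1-z-(k*z))+z*(k*z)) * ((1-z)*z'*(1-z')) := by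
      have hid : ((z+(k*z))*(1-z-(k*z))+z*(k*z)) * ((1-z)*z'*(1-z'))
          - ((z+z')*(1-z-z')+z*z') * ((1-z)*(k*z)*(1-(k*z)))
          = (1-z)*(z'-(k*z))*z*((1-(k*z))*(1-z') - z*(1-(k*z)-z')) := by ring
      have hpos : 0 ≤ (1-z)*(z'-(k*z))*z*((1-(k*z))*(1-z') - z*(1-(k*z)-z')) :=
        mul_nonneg (mul_nonneg (mul_nonneg (by linarith) (by linarith)) hz0.le) hB.le
      linarith
    have hDw : 0 < (1-z)*(k*z)*(1-(k*z)) :=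
      mul_pos (mul_pos (by linarith) hkz0) (by linarith)
    have hNfDg : ((z+z')*(1-z-z')+z*z') * ((1-x)*(k*x)*(1-(k*x)))
        < ((x+k*x)*(1-x-(k*x))+x*(k*x)) * ((1-z)*z'*(1-z')) := by
      have m1 := mul_le_mul_of_nonneg_right hC1 hDgk.le
      have m2 := mul_lt_mul_of_pos_right hC2 hDf
      have e1 : ((z+(k*z))*(1-z-(k*z))+z*(k*z)) * ((1-z)*z'*(1-z')) * ((1-x)*(k*x)*(1-(k*x)))
          = ((z+k*z)*(1-z-k*z)+z*(k*z)) * ((1-x)*(k*x)*(1-(k*x))) * ((1-z)*z'*(1-z')) := by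
        ring
      have m3 : ((z+z')*(1-z-z')+z*z') * ((1-z)*(k*z)*(1-(k*z))) * ((1-x)*(k*x)*(1-(k*x)))
          < ((x+k*x)*(1-x-(k*x))+x*(k*x)) * ((1-z)*(k*z)*(1-(k*z))) * ((1-z)*z'*(1-z')) :=
        lt_of_le_of_lt (m1.trans_eq e1) m2
      have e2 : ((z+z')*(1-z-z')+z*z') * ((1-z)*(k*z)*(1-(k*z))) * ((1-x)*(k*x)*(1-(k*x)))
          = ((z+z')*(1-z-z')+z*z') * ((1-x)*(k*x)*(1-(k*x))) * ((1-z)*(k*z)*(1-(k*z))) := by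
        ring
      have e3 : ((x+k*x)*(1-x-(k*x))+x*(k*x)) * ((1-z)*(k*z)*(1-(k*z))) * ((1-z)*z'*(1-z'))
          = ((x+k*x)*(1-x-(k*x))+x*(k*x)) * ((1-z)*z'*(1-z')) * ((1-z)*(k*z)*(1-(k*z))) := by
        ring
      rw [e2, e3] at m3
      exact lt_of_mul_lt_mul_right m3 hDw.le
    have hlt : p * (((1-z)*z'*(1-z')) * ((1-x)*(k*x)*(1-(k*x))))
        < r * (((1-z)*z'*(1-z')) * ((1-x)*(k*x)*(1-(k*x)))) := by
      have hm := mul_lt_mul_of_pos_left hNfDg hγ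
      calc p * (((1-z)*z'*(1-z')) * ((1-x)*(k*x)*(1-(k*x))))
          = (p*((1-z)*z'*(1-z'))) * ((1-x)*(k*x)*(1-(k*x))) := by ring
        _ = (γ*((z+z')*(1-z-z')+z*z')) * ((1-x)*(k*x)*(1-(k*x))) := by rw [hpD]
        _ = γ*(((z+z')*(1-z-z')+z*z') * ((1-x)*(k*x)*(1-(k*x)))) := by ring
        _ < γ*(((x+k*x)*(1-x-(k*x))+x*(k*x)) * ((1-z)*z'*(1-z'))) := hm
        _ = (γ*((x+k*x)*(1-x-(k*x))+x*(k*x))) * ((1-z)*z'*(1-z')) := by ring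
        _ = (r*((1-x)*(k*x)*(1-(k*x)))) * ((1-z)*z'*(1-z')) := by rw [hrD]
        _ = r * (((1-z)*z'*(1-z')) * ((1-x)*(k*x)*(1-(k*x)))) := by ring
    have hge' : r * (((1-z)*z'*(1-z')) * ((1-x)*(k*x)*(1-(k*x))))
        ≤ p * (((1-z)*z'*(1-z')) * ((1-x)*(k*x)*(1-(k*x)))) :=
      mul_le_mul_of_nonneg_right hpr (mul_pos hDf hDgk).le
    linarith
end

section
/- Let f,g∈ℋ with f(x)≥g(x) for all x∈[0,1] and f≠g. Then g(c_g)/c_g < f(c_f)/c_f. -/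
open Set Polynomial

/-!
A member of ℋ is `x (1 - x) (a + b x)`, and the critical-point equation fixes the ratio of `a`
and `b` in terms of `c`, so that `f(x) = (f(c)/c) · x (1 - x) · σ_c(x)` for an explicit linear
`σ_c`. At the point `t` where `c ↦ σ_c(t)` is maximal at `c = c_g`, the inequality `g(t) ≤ f(t)`
gives `g(c_g)/c_g · σ_{c_g}(t) ≤ f(c_f)/c_f · σ_{c_f}(t) < f(c_f)/c_f · σ_{c_g}(t)` when
`c_f ≠ c_g`. When `c_f = c_g`, `f` and `g` are proportional, so `g(c) < f(c)`.
-/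

theorem Polynomial.exists_eq_X_mul_one_sub_X_mul {f : ℝ[X]} (hdeg : f.degree ≤ 3)
    (h0 : f.eval 0 = 0) (h1 : f.eval 1 = 0) :
    ∃ a b : ℝ, f = X * (1 - X) * (C a + C b * X) := by
  have hlt : f.natDegree < 4 := by
    have : f.natDegree ≤ 3 := natDegree_le_iff_degree_le.mpr hdeg
    omega
  have heval (x : ℝ) :
      f.eval x = f.coeff 0 + f.coeff 1 * x + f.coeff 2 * x ^ 2 + f.coeff 3 * x ^ 3 := by
    simp [eval_eq_sum_range' hlt, Finset.sum_range_succ]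
  rw [heval] at h0 h1
  refine ⟨f.coeff 1, -f.coeff 3, Polynomial.funext fun x => ?_⟩
  simp only [heval, eval_mul, eval_sub, eval_add, eval_X, eval_C, eval_one]
  linear_combination (1 - x ^ 2) * h0 + x ^ 2 * h1

theorem Polynomial.eval_derivative_X_mul_one_sub_X_mul (a b x : ℝ) :
    (X * (1 - X) * (C a + C b * X)).derivative.eval x = a + 2 * (b - a) * x - 3 * b * x ^ 2 := by
  simp only [derivative_mul, derivative_X, derivative_sub, derivative_one, derivative_add,
    derivative_C, eval_add, eval_mul, eval_sub, eval_X, eval_C, eval_one, eval_zero]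
  ring

theorem add_nonneg_of_forall_mem_Ioo {a b : ℝ} (h : ∀ x ∈ Ioo (0 : ℝ) 1, 0 ≤ a + b * x) :
    0 ≤ a + b := by
  have : Icc (0 : ℝ) 1 ⊆ {x | 0 ≤ a + b * x} := by
    rw [← closure_Ioo zero_ne_one]
    exact closure_minimal h (isClosed_le continuous_const (by fun_prop))
  simpa using this (right_mem_Icc.mpr zero_le_one)

/-- `σ_c`: the linear factor of the member of ℋ with critical point `c` and `f(c)/c = 1`. -/
noncomputable def shapeFactor (c x : ℝ) : ℝ :=
  (c * (2 - 3 * c) + (2 * c - 1) * x) / (c * (1 - c) ^ 2)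

/-- The `x` at which `c' ↦ σ_{c'}(x)` has its critical point at `c' = c`. -/
noncomputable def testPoint (c : ℝ) : ℝ := c ^ 2 * (3 * c - 1) / (4 * c ^ 2 - 3 * c + 1)

theorem testPoint_denom_pos (c : ℝ) : 0 < 4 * c ^ 2 - 3 * c + 1 := by
  nlinarith [sq_nonneg (8 * c - 3)]

theorem testPoint_mul_denom (c : ℝ) :
    testPoint c * (4 * c ^ 2 - 3 * c + 1) = c ^ 2 * (3 * c - 1) :=
  div_mul_cancel₀ _ (testPoint_denom_pos c).ne'

theorem testPoint_mem_Ioo {c : ℝ} (hc : c ∈ Ioo (1 / 3) 1) : testPoint c ∈ Ioo 0 1 := by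
  obtain ⟨hc13, hc1⟩ := hc
  have hs := testPoint_denom_pos c
  refine ⟨div_pos (by nlinarith) hs, (div_lt_one hs).mpr ?_⟩
  nlinarith [sq_nonneg (3 * c - 1), sq_nonneg c]

theorem shapeFactor_testPoint_pos {c : ℝ} (hc : c ∈ Ioo 0 1) :
    0 < shapeFactor c (testPoint c) := by
  obtain ⟨hc0, hc1⟩ := hc
  have hs := testPoint_denom_pos c
  have hnum : (c * (2 - 3 * c) + (2 * c - 1) * testPoint c) * (4 * c ^ 2 - 3 * c + 1) =
      2 * c * (1 - c) * (3 * c ^ 2 - 3 * c + 1) := by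
    linear_combination (2 * c - 1) * testPoint_mul_denom c
  have : 0 < 3 * c ^ 2 - 3 * c + 1 := by nlinarith [sq_nonneg (2 * c - 1)]
  have : 0 < 1 - c := by linarith
  exact div_pos (pos_of_mul_pos_left (hnum ▸ by positivity) hs.le) (by positivity)

theorem shapeFactor_lt_shapeFactor_testPoint {c c' : ℝ} (hc : c ∈ Ioo 0 1)
    (hc' : c' ∈ Ioo (1 / 3) 1) (hne : c ≠ c') :
    shapeFactor c (testPoint c') < shapeFactor c' (testPoint c') := by
  obtain ⟨hc0, hc1⟩ := hc
  obtain ⟨hc13', hc1'⟩ := hc'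
  have hs := testPoint_denom_pos c'
  set t := testPoint c'
  have hdiff : ((c' * (2 - 3 * c') + (2 * c' - 1) * t) * (c * (1 - c) ^ 2) -
      (c * (2 - 3 * c) + (2 * c - 1) * t) * (c' * (1 - c') ^ 2)) * (4 * c' ^ 2 - 3 * c' + 1) =
      (c' - c) ^ 2 * (c' * (1 - c')) *
        (2 * c * (3 * c' ^ 2 - 3 * c' + 1) + (3 * c' - 1) * (1 - c')) := by
    linear_combination ((2 * c' - 1) * c * (1 - c) ^ 2 - (2 * c - 1) * c' * (1 - c') ^ 2) *
      testPoint_mul_denom c'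
  have : 0 < 3 * c' ^ 2 - 3 * c' + 1 := by nlinarith [sq_nonneg (2 * c' - 1)]
  have : 0 < 3 * c' - 1 := by linarith
  have : 0 < 1 - c := by linarith
  have : 0 < 1 - c' := by linarith
  have : 0 < (c' - c) ^ 2 := by have := sub_ne_zero.mpr hne.symm; positivity
  rw [shapeFactor, shapeFactor, div_lt_div_iff₀ (by positivity) (by positivity), ← sub_pos]
  exact pos_of_mul_pos_left (hdiff ▸ by positivity) hs.le

namespace HClass

variable {f : ℝ[X]} {a b c : ℝ}

theorem mem_Ioo (hf : HClass f c) : c ∈ Ioo 0 1 := by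
  obtain ⟨m, hm, hderiv⟩ := exists_deriv_eq_zero zero_lt_one f.continuousOn
    (hf.f0.trans hf.f1.symm)
  rw [Polynomial.deriv] at hderiv
  exact hf.uniq m (Ioo_subset_Icc_self hm) hderiv ▸ hm

theorem crit_eq (hf : HClass f c) (hab : f = X * (1 - X) * (C a + C b * X)) :
    a + 2 * (b - a) * c - 3 * b * c ^ 2 = 0 := by
  rw [← eval_derivative_X_mul_one_sub_X_mul, ← hab, hf.crit]

theorem add_pos (hf : HClass f c) (hab : f = X * (1 - X) * (C a + C b * X)) : 0 < a + b := by
  have hnonneg : 0 ≤ a + b := add_nonneg_of_forall_mem_Ioo fun x ⟨hx0, hx1⟩ => by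
    have := hf.nonneg x ⟨hx0.le, hx1.le⟩
    simp only [hab, eval_mul, eval_sub, eval_add, eval_X, eval_C, eval_one] at this
    exact nonneg_of_mul_nonneg_right this (mul_pos hx0 (sub_pos.mpr hx1))
  -- `a + b = 0` would make `1` a second critical point.
  refine hnonneg.lt_of_ne fun hzero => hf.mem_Ioo.2.ne ?_
  refine (hf.uniq 1 (right_mem_Icc.mpr zero_le_one) ?_).symm
  rw [hab, eval_derivative_X_mul_one_sub_X_mul]
  linear_combination hzero

theorem eval_pos (hf : HClass f c) : 0 < f.eval c := by
  obtain ⟨a, b, hab⟩ := exists_eq_X_mul_one_sub_X_mul hf.deg hf.f0 hf.f1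
  obtain ⟨hc0, hc1⟩ := hf.mem_Ioo
  have hcrit := hf.crit_eq hab
  have hnonneg := hf.nonneg c hf.hc
  have heval : f.eval c = c * (1 - c) * (a + b * c) := by simp [hab]
  rw [heval] at hnonneg ⊢
  refine hnonneg.lt_of_ne fun hzero => hf.ne0 ?_
  have ha : a + b * c = 0 := by
    simpa [hc0.ne', (sub_pos.mpr hc1).ne'] using hzero.symm
  have hb : b = 0 := by
    have : b * c * (1 - c) = 0 := by linear_combination hcrit - (1 - 2 * c) * ha
    simpa [hc0.ne', (sub_pos.mpr hc1).ne'] using this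
  simp [hab, hb, show a = 0 by linear_combination ha - c * hb]

theorem one_third_lt (hf : HClass f c) : 1 / 3 < c := by
  obtain ⟨a, b, hab⟩ := exists_eq_X_mul_one_sub_X_mul hf.deg hf.f0 hf.f1
  obtain ⟨hc0, hc1⟩ := hf.mem_Ioo
  have hR : 0 < (1 - c) * (a + b * c) := by
    have := hf.eval_pos
    simp only [hab, eval_mul, eval_sub, eval_add, eval_X, eval_C, eval_one, mul_assoc] at this
    exact pos_of_mul_pos_right this hc0.le
  have hid : (a + b) * (c * (1 - c) ^ 2) = (1 - c) * (a + b * c) * ((1 - c) * (3 * c - 1)) := by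
    linear_combination (1 - c) ^ 2 * hf.crit_eq hab
  have := hid ▸ mul_pos (hf.add_pos hab) (mul_pos hc0 (pow_pos (sub_pos.mpr hc1) 2))
  have := pos_of_mul_pos_right (pos_of_mul_pos_right this hR.le) (sub_pos.mpr hc1).le
  linarith

theorem eval_eq_mul_shapeFactor (hf : HClass f c) (x : ℝ) :
    f.eval x = f.eval c / c * (x * (1 - x) * shapeFactor c x) := by
  obtain ⟨a, b, hab⟩ := exists_eq_X_mul_one_sub_X_mul hf.deg hf.f0 hf.f1
  obtain ⟨hc0, hc1⟩ := hf.mem_Ioo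
  have : 1 - c ≠ 0 := (sub_pos.mpr hc1).ne'
  have hcrit := hf.crit_eq hab
  simp only [hab, eval_mul, eval_sub, eval_add, eval_X, eval_C, eval_one, shapeFactor]
  field_simp
  linear_combination x * (1 - x) * (x - c) * hcrit

end HClass

theorem stmt16 (f g : Polynomial ℝ) (cf cg : ℝ) (hf : HClass f cf) (hg : HClass g cg)
    (hge : ∀ x ∈ Set.Icc (0:ℝ) 1, g.eval x ≤ f.eval x) (hfg : f ≠ g) :
    g.eval cg / cg < f.eval cf / cf := by
  have hcf := hf.mem_Ioo
  have hcg : cg ∈ Ioo (1 / 3) 1 := ⟨hg.one_third_lt, hg.mem_Ioo.2⟩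
  by_cases hc : cf = cg
  · subst hc
    have hne : g.eval cf ≠ f.eval cf := fun h => hfg <| Polynomial.funext fun x => by
      rw [hf.eval_eq_mul_shapeFactor, hg.eval_eq_mul_shapeFactor, h]
    exact div_lt_div_of_pos_right ((hge cf hf.hc).lt_of_ne hne) hcf.1
  · set t := testPoint cg
    obtain ⟨ht0, ht1⟩ := testPoint_mem_Ioo hcg
    have hle : g.eval cg / cg * shapeFactor cg t ≤ f.eval cf / cf * shapeFactor cf t := by
      have h := hge t ⟨ht0.le, ht1.le⟩
      rw [hf.eval_eq_mul_shapeFactor, hg.eval_eq_mul_shapeFactor] at h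
      refine le_of_mul_le_mul_left ?_ (mul_pos ht0 (sub_pos.mpr ht1))
      rwa [mul_left_comm _ (g.eval cg / cg), mul_left_comm _ (f.eval cf / cf)]
    have hlt : f.eval cf / cf * shapeFactor cf t < f.eval cf / cf * shapeFactor cg t :=
      mul_lt_mul_of_pos_left (shapeFactor_lt_shapeFactor_testPoint hcf hcg hc)
        (div_pos hf.eval_pos hcf.1)
    exact lt_of_mul_lt_mul_right (hle.trans_lt hlt)
      (shapeFactor_testPoint_pos (Ioo_subset_Ioo_left (by norm_num) hcg)).le
end
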